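/- arXiv:2205.05384 — 4 statements merged into one kernel-verified Lean document; each statement's English description precedes it below -/
import Mathlib

section
/- Let (E,C) be a row-finite bipartite separated graph with s(E^1)=E^{0,0} and r(E^1)=E^{0,1}, and let K be a field with involution. Then there is a *-algebra isomorphism φ_V : LV(E,C) → V L(E,C) V determined by φ_V(p_v)=v for v∈E^{0,0} and φ_V(τ(e,f))=e f* for e,f∈E^1 with r(e)=r(f), where V L(E,C) V denotes the linear span in L(E,C) of all elements u a w with u,w∈E^{0,0} and a∈L(E,C). -/
open Sum

noncomputable section
open scoped Classical

/-- A bipartite separated graph. -/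
structure BipSepGraph where
  V0 : Type
  V1 : Type
  E : Type
  s : E → V0
  r : E → V1
  c : E → E → Prop
  c_equiv : Equivalence c
  c_src : ∀ {e f}, c e f → s e = s f
  rowFinite : ∀ v : V0, {e | s e = v}.Finite

namespace BipSepGraph

lemma classSet_finite (G : BipSepGraph) (e : G.E) : {f | G.c e f}.Finite :=
  (G.rowFinite (G.s e)).subset (fun _ hf => (G.c_src hf).symm)

/-- The finite set of edges in the same member of the partition `C` as `e`. -/
def classFinset (G : BipSepGraph) (e : G.E) : Finset G.E :=
  (G.classSet_finite e).toFinset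

end BipSepGraph

variable (K : Type) [Field K] [StarRing K]

/-- A representation of the relations defining the Leavitt path algebra `L(E,C)` of a
separated graph in a (nonunital) `*`-algebra. -/
structure LPARep (G : BipSepGraph) (A : Type) [NonUnitalRing A] [Module K A]
    [SMulCommClass K A A] [IsScalarTower K A A] [StarRing A] [StarModule K A] where
  pv : G.V0 ⊕ G.V1 → A
  ge : G.E → A
  pv_star : ∀ u, star (pv u) = pv u
  pv_idem : ∀ u, pv u * pv u = pv u
  pv_orth : ∀ u u', u ≠ u' → pv u * pv u' = 0
  src_mul : ∀ e, pv (inl (G.s e)) * ge e = ge e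
  mul_rng : ∀ e, ge e * pv (inr (G.r e)) = ge e
  sck1 : ∀ e f, G.c e f → star (ge e) * ge f = if e = f then pv (inr (G.r e)) else 0
  sck2 : ∀ e, ∑ f ∈ G.classFinset e, ge f * star (ge f) = pv (inl (G.s e))

/-- `L` (with the representation `ρ`) *is* the Leavitt path algebra `L(E,C)`:
it satisfies the universal property among all `*`-algebras over `K`. -/
def IsLPA (G : BipSepGraph) (L : Type) [NonUnitalRing L] [Module K L]
    [SMulCommClass K L L] [IsScalarTower K L L] [StarRing L] [StarModule K L]
    (ρ : LPARep K G L) : Prop :=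
  ∀ (A : Type) [NonUnitalRing A] [Module K A] [SMulCommClass K A A] [IsScalarTower K A A]
    [StarRing A] [StarModule K A] (σ : LPARep K G A),
    ∃! φ : L →⋆ₙₐ[K] A, (∀ u, φ (ρ.pv u) = σ.pv u) ∧ (∀ e, φ (ρ.ge e) = σ.ge e)

/-- A representation of the relations defining the upper Leavitt path algebra `LV(E,C)`
of a bipartite separated graph.  The generator `τ(e,f)` (for `r e = r f`) is `tau e f`;
values of `tau` at pairs with `r e ≠ r f` are irrelevant. -/
structure LVRep (G : BipSepGraph) (A : Type) [NonUnitalRing A] [Module K A]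
    [SMulCommClass K A A] [IsScalarTower K A A] [StarRing A] [StarModule K A] where
  pv : G.V0 → A
  tau : G.E → G.E → A
  pv_star : ∀ v, star (pv v) = pv v
  pv_idem : ∀ v, pv v * pv v = pv v
  pv_orth : ∀ v v', v ≠ v' → pv v * pv v' = 0
  tau_star : ∀ e f, G.r e = G.r f → star (tau e f) = tau f e
  tau_right : ∀ e f, G.r e = G.r f → tau e f * pv (G.s f) = tau e f
  tau_left : ∀ e f, G.r e = G.r f → pv (G.s e) * tau e f = tau e f
  sck1 : ∀ e f g h, G.r e = G.r f → G.r g = G.r h → G.c f g →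
    tau e f * tau g h = if f = g then tau e h else 0
  sck2 : ∀ g : G.E, ∑ e ∈ G.classFinset g, tau e e = pv (G.s g)

/-- `L` (with the representation `ρ`) *is* the upper Leavitt path algebra `LV(E,C)`. -/
def IsLV (G : BipSepGraph) (L : Type) [NonUnitalRing L] [Module K L]
    [SMulCommClass K L L] [IsScalarTower K L L] [StarRing L] [StarModule K L]
    (ρ : LVRep K G L) : Prop :=
  ∀ (A : Type) [NonUnitalRing A] [Module K A] [SMulCommClass K A A] [IsScalarTower K A A]
    [StarRing A] [StarModule K A] (σ : LVRep K G A),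
    ∃! φ : L →⋆ₙₐ[K] A, (∀ v, φ (ρ.pv v) = σ.pv v) ∧
      (∀ e f, G.r e = G.r f → φ (ρ.tau e f) = σ.tau e f)

/-- A representation of the relations defining the lower Leavitt path algebra `LW(E,C)`
of a bipartite separated graph.  The generator `ρ(e,f)` (for `s e = s f`, `X_e ≠ X_f`)
is `rho e f`; the values of `rho` at other pairs are irrelevant. -/
structure LWRep (G : BipSepGraph) (A : Type) [NonUnitalRing A] [Module K A]
    [SMulCommClass K A A] [IsScalarTower K A A] [StarRing A] [StarModule K A] where
  pw : G.V1 → A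
  rho : G.E → G.E → A
  pw_star : ∀ w, star (pw w) = pw w
  pw_idem : ∀ w, pw w * pw w = pw w
  pw_orth : ∀ w w', w ≠ w' → pw w * pw w' = 0
  rho_star : ∀ e f, G.s e = G.s f → ¬ G.c e f → star (rho e f) = rho f e
  rho_right : ∀ e f, G.s e = G.s f → ¬ G.c e f → rho e f * pw (G.r f) = rho e f
  rho_left : ∀ e f, G.s e = G.s f → ¬ G.c e f → pw (G.r e) * rho e f = rho e f
  sck1 : ∀ e h g, G.s e = G.s h → G.s g = G.s e → ¬ G.c g e → ¬ G.c g h →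
    (∑ f ∈ G.classFinset g, rho e f * rho f h) =
      if G.c e h then (if e = h then pw (G.r e) else 0) else rho e h

/-- `L` (with the representation `ρ`) *is* the lower Leavitt path algebra `LW(E,C)`. -/
def IsLW (G : BipSepGraph) (L : Type) [NonUnitalRing L] [Module K L]
    [SMulCommClass K L L] [IsScalarTower K L L] [StarRing L] [StarModule K L]
    (ρ : LWRep K G L) : Prop :=
  ∀ (A : Type) [NonUnitalRing A] [Module K A] [SMulCommClass K A A] [IsScalarTower K A A]
    [StarRing A] [StarModule K A] (σ : LWRep K G A),
    ∃! φ : L →⋆ₙₐ[K] A, (∀ w, φ (ρ.pw w) = σ.pw w) ∧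
      (∀ e f, G.s e = G.s f → ¬ G.c e f → φ (ρ.rho e f) = σ.rho e f)

section Aux
set_option linter.unusedSectionVars false

variable {K : Type} [Field K] [StarRing K]
variable {L : Type} [NonUnitalRing L] [Module K L] [SMulCommClass K L L] [IsScalarTower K L L]
  [StarRing L] [StarModule K L]

lemma spanMul {s : Set L} (h : ∀ x ∈ s, ∀ y ∈ s, x * y ∈ Submodule.span K s) :
    ∀ x ∈ Submodule.span K s, ∀ y ∈ Submodule.span K s, x * y ∈ Submodule.span K s := by
  intro x hx y hy
  induction hx using Submodule.span_induction with
  | mem a ha =>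
    induction hy using Submodule.span_induction with
    | mem b hb => exact h a ha b hb
    | zero => simp
    | add b c _ _ hb hc => rw [mul_add]; exact Submodule.add_mem _ hb hc
    | smul k b _ hb => rw [mul_smul_comm]; exact Submodule.smul_mem _ _ hb
  | zero => simp
  | add a b _ _ ha hb => rw [add_mul]; exact Submodule.add_mem _ ha hb
  | smul k a _ ha => rw [smul_mul_assoc]; exact Submodule.smul_mem _ _ ha

lemma spanStar {s : Set L} (h : ∀ x ∈ s, star x ∈ Submodule.span K s) :
    ∀ x ∈ Submodule.span K s, star x ∈ Submodule.span K s := by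
  intro x hx
  induction hx using Submodule.span_induction with
  | mem a ha => exact h a ha
  | zero => simp
  | add a b _ _ ha hb => rw [star_add]; exact Submodule.add_mem _ ha hb
  | smul k a _ ha => rw [star_smul]; exact Submodule.smul_mem _ _ ha

/-- Build a star subalgebra from a set whose span is multiplicatively and star closed. -/
def mkSub (s : Set L) (hmul : ∀ x ∈ s, ∀ y ∈ s, x * y ∈ Submodule.span K s)
    (hstar : ∀ x ∈ s, star x ∈ Submodule.span K s) : NonUnitalStarSubalgebra K L where
  carrier := Submodule.span K s
  add_mem' := fun ha hb => Submodule.add_mem _ ha hb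
  zero_mem' := Submodule.zero_mem _
  smul_mem' := fun k _ ha => Submodule.smul_mem _ k ha
  mul_mem' := fun ha hb => spanMul hmul _ ha _ hb
  star_mem' := fun ha => spanStar hstar _ ha

lemma mem_mkSub {s : Set L} (hmul : ∀ x ∈ s, ∀ y ∈ s, x * y ∈ Submodule.span K s)
    (hstar : ∀ x ∈ s, star x ∈ Submodule.span K s) {x : L} :
    x ∈ mkSub s hmul hstar ↔ x ∈ Submodule.span K s := Iff.rfl

lemma spanMulSpan {s t : Set L} {U : Submodule K L} (h : ∀ x ∈ s, ∀ y ∈ t, x * y ∈ U) :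
    ∀ x ∈ Submodule.span K s, ∀ y ∈ Submodule.span K t, x * y ∈ U := by
  intro x hx y hy
  induction hx using Submodule.span_induction with
  | mem a ha =>
    induction hy using Submodule.span_induction with
    | mem b hb => exact h a ha b hb
    | zero => simp
    | add b c _ _ hb hc => rw [mul_add]; exact Submodule.add_mem _ hb hc
    | smul k b _ hb => rw [mul_smul_comm]; exact Submodule.smul_mem _ _ hb
  | zero => simp
  | add a b _ _ ha hb => rw [add_mul]; exact Submodule.add_mem _ ha hb
  | smul k a _ ha => rw [smul_mul_assoc]; exact Submodule.smul_mem _ _ ha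

end Aux
section Link
set_option linter.unusedSectionVars false

variable {K : Type} [Field K] [StarRing K]
variable {I : Type} {B : Type} [NonUnitalRing B] [Module K B] [SMulCommClass K B B]
  [IsScalarTower K B B] [StarRing B] [StarModule K B]

/-- Elementary "matrix" endomorphism of `I →₀ B`. -/
def Eop (i j : I) (x : B) : Module.End K (I →₀ B) where
  toFun m := Finsupp.single i (x * m j)
  map_add' m n := by simp [mul_add, Finsupp.single_add]
  map_smul' k m := by
    simp only [RingHom.id_apply, Finsupp.smul_apply]
    rw [mul_smul_comm, Finsupp.smul_single]

lemma Eop_apply (i j : I) (x : B) (m : I →₀ B) :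
    Eop (K := K) i j x m = Finsupp.single i (x * m j) := rfl

lemma Eop_mul (i j k l : I) (x y : B) :
    (Eop (K := K) i j x) * (Eop k l y) = if j = k then Eop i l (x * y) else 0 := by
  apply LinearMap.ext; intro m
  simp only [Module.End.mul_apply, Eop_apply, Finsupp.single_apply]
  by_cases h : j = k
  · subst h; simp [Eop_apply, mul_assoc]
  · rw [if_neg h]
    have : (if k = j then y * m l else 0) = 0 := by
      rw [if_neg (Ne.symm h)]
    rw [this, mul_zero, Finsupp.single_zero]
    simp

lemma Eop_add (i j : I) (x y : B) :
    (Eop (K := K) i j x) + (Eop i j y) = Eop i j (x + y) := by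
  apply LinearMap.ext; intro m
  simp [Eop_apply, add_mul, Finsupp.single_add]

lemma Eop_zero (i j : I) : (Eop (K := K) i j (0 : B)) = 0 := by
  apply LinearMap.ext; intro m; simp [Eop_apply]

variable (K I B) in
/-- The auxiliary "linking" algebra: pairs of endomorphisms with swap star and twisted
scalar action. -/
def LinkA : Type := (Module.End K (I →₀ B)) × (Module.End K (I →₀ B))ᵐᵒᵖ

namespace LinkA

instance : NonUnitalRing (LinkA K I B) :=
  inferInstanceAs (NonUnitalRing ((Module.End K (I →₀ B)) × (Module.End K (I →₀ B))ᵐᵒᵖ))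

instance : SMul K (LinkA K I B) :=
  ⟨fun k x => (k • x.1, MulOpposite.op (star k • x.2.unop))⟩

lemma smul_def (k : K) (x : LinkA K I B) :
    k • x = (k • x.1, MulOpposite.op (star k • x.2.unop)) := rfl

lemma fst_add (x y : LinkA K I B) : (x + y).1 = x.1 + y.1 := rfl
lemma snd_add (x y : LinkA K I B) : (x + y).2 = x.2 + y.2 := rfl
lemma fst_mul (x y : LinkA K I B) : (x * y).1 = x.1 * y.1 := rfl
lemma snd_mul (x y : LinkA K I B) : (x * y).2 = x.2 * y.2 := rfl
lemma fst_zero : (0 : LinkA K I B).1 = 0 := rfl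
lemma snd_zero : (0 : LinkA K I B).2 = 0 := rfl

protected lemma ext {x y : LinkA K I B} (h1 : x.1 = y.1) (h2 : x.2 = y.2) : x = y :=
  Prod.ext h1 h2

instance : Module K (LinkA K I B) where
  one_smul x := by simp [smul_def]; rfl
  mul_smul k l x := by
    simp [smul_def, mul_smul, star_mul, mul_comm (star l) (star k)]; rfl
  smul_zero k := by
    apply LinkA.ext <;> simp [smul_def, fst_zero, snd_zero]
  smul_add k x y := by
    apply LinkA.ext <;> simp [smul_def, fst_add, snd_add, smul_add] <;> rfl
  add_smul k l x := by
    apply LinkA.ext <;> simp [smul_def, fst_add, snd_add, add_smul] <;> rfl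
  zero_smul x := by
    apply LinkA.ext <;> simp [smul_def, fst_zero, snd_zero]

instance : SMulCommClass K (LinkA K I B) (LinkA K I B) where
  smul_comm k x y := by
    show k • (x * y) = x * (k • y)
    apply LinkA.ext
    · show k • (x.1 * y.1) = x.1 * (k • y.1)
      exact (mul_smul_comm k x.1 y.1).symm
    · show MulOpposite.op (star k • (y.2.unop * x.2.unop)) = x.2 * MulOpposite.op (star k • y.2.unop)
      rw [← smul_mul_assoc, MulOpposite.op_mul, MulOpposite.op_unop]

instance : IsScalarTower K (LinkA K I B) (LinkA K I B) where
  smul_assoc k x y := by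
    show (k • x) * y = k • (x * y)
    apply LinkA.ext
    · exact smul_mul_assoc k x.1 y.1
    · show MulOpposite.op (star k • x.2.unop) * y.2
          = MulOpposite.op (star k • (y.2.unop * x.2.unop))
      rw [← mul_smul_comm, MulOpposite.op_mul, MulOpposite.op_unop]

instance : Star (LinkA K I B) := ⟨fun x => (x.2.unop, MulOpposite.op x.1)⟩

lemma star_def (x : LinkA K I B) : star x = (x.2.unop, MulOpposite.op x.1) := rfl

instance : StarRing (LinkA K I B) where
  star_involutive x := by apply LinkA.ext <;> simp [star_def] <;> rfl
  star_add x y := by apply LinkA.ext <;> simp [star_def, fst_add, snd_add] <;> rfl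
  star_mul x y := by
    apply LinkA.ext
    · show (x.2 * y.2).unop = (star y).1 * (star x).1
      simp [star_def]
    · show MulOpposite.op (x.1 * y.1) = ((star y) * (star x)).2
      simp [star_def, snd_mul]; rfl

instance : StarModule K (LinkA K I B) where
  star_smul k x := by
    apply LinkA.ext
    · show (k • x).2.unop = star k • (star x).1
      simp [smul_def, star_def]
    · show MulOpposite.op (k • x).1 = (star k • star x).2
      simp [smul_def, star_def, star_star]
      show _ = MulOpposite.op (star (star k) • x.1)
      simp

end LinkA

/-- generator elements of the linking algebra -/
def gel (i j : I) (x : B) : LinkA K I B := (Eop i j x, MulOpposite.op (Eop j i (star x)))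

lemma gel_mul (i j k l : I) (x y : B) :
    gel (K := K) i j x * gel k l y = if j = k then gel i l (x * y) else 0 := by
  apply LinkA.ext
  · show Eop i j x * Eop k l y = _
    rw [Eop_mul]
    by_cases h : j = k <;> simp [h, gel, LinkA.fst_zero]
  · show MulOpposite.op (Eop l k (star y) * Eop j i (star x)) = _
    rw [Eop_mul]
    by_cases h : j = k
    · subst h; simp [gel, star_mul]
    · rw [if_neg fun hh => h hh.symm, if_neg h]
      simp [LinkA.snd_zero]

lemma gel_star (i j : I) (x : B) : star (gel (K := K) i j x) = gel j i (star x) := by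
  apply LinkA.ext
  · simp [gel, LinkA.star_def]; rfl
  · simp [gel, LinkA.star_def, star_star]; rfl

lemma gel_add (i j : I) (x y : B) :
    gel (K := K) i j x + gel i j y = gel i j (x + y) := by
  apply LinkA.ext
  · show Eop i j x + Eop i j y = _
    rw [Eop_add]; rfl
  · show MulOpposite.op (Eop j i (star x)) + MulOpposite.op (Eop j i (star y)) = _
    rw [← MulOpposite.op_add, Eop_add, ← star_add]; rfl

lemma gel_zero (i j : I) : gel (K := K) i j (0 : B) = 0 := by
  apply LinkA.ext
  · show Eop i j 0 = 0
    exact Eop_zero i j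
  · show MulOpposite.op (Eop j i (star (0:B))) = 0
    rw [star_zero, Eop_zero]; rfl

lemma gel_sum {α : Type} (F : Finset α) (i j : I) (x : α → B) :
    gel (K := K) i j (∑ a ∈ F, x a) = ∑ a ∈ F, gel i j (x a) := by
  classical
  refine Finset.induction_on F (by simp [gel_zero]) ?_
  intro a F' ha ih
  rw [Finset.sum_insert ha, Finset.sum_insert ha, ← ih, gel_add]

end Link
section Graph
set_option linter.unusedSectionVars false
set_option maxHeartbeats 1000000

variable {K : Type} [Field K] [StarRing K] {G : BipSepGraph}
variable {L : Type} [NonUnitalRing L] [Module K L] [SMulCommClass K L L] [IsScalarTower K L L]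
  [StarRing L] [StarModule K L]

lemma mem_classFinset {e f : G.E} : f ∈ G.classFinset e ↔ G.c e f := by
  simp [BipSepGraph.classFinset, Set.Finite.mem_toFinset]

/-- Generators of `L(E,C)`. -/
def sL (ρ : LPARep K G L) : Set L :=
  {x | (∃ u, x = ρ.pv u) ∨ (∃ e, x = ρ.ge e) ∨ (∃ e, x = star (ρ.ge e))}

lemma sL_star_closure (ρ : LPARep K G L) :
    ∀ x ∈ Subsemigroup.closure (sL ρ), star x ∈ Subsemigroup.closure (sL ρ) := by
  intro x hx
  induction hx using Subsemigroup.closure_induction with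
  | mem a ha =>
    apply Subsemigroup.subset_closure
    rcases ha with ⟨u, rfl⟩ | ⟨e, rfl⟩ | ⟨e, rfl⟩
    · rw [ρ.pv_star]; exact Or.inl ⟨u, rfl⟩
    · exact Or.inr (Or.inr ⟨e, rfl⟩)
    · rw [star_star]; exact Or.inr (Or.inl ⟨e, rfl⟩)
  | mul a b _ _ ha hb => rw [star_mul]; exact mul_mem hb ha

/-- The star subalgebra generated by the generators of `L(E,C)`. -/
def TL (ρ : LPARep K G L) : NonUnitalStarSubalgebra K L :=
  mkSub (↑(Subsemigroup.closure (sL ρ)))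
    (fun _ hx _ hy => Submodule.subset_span (mul_mem hx hy))
    (fun x hx => Submodule.subset_span (sL_star_closure ρ x hx))

lemma mem_TL_pv (ρ : LPARep K G L) (u : G.V0 ⊕ G.V1) : ρ.pv u ∈ TL ρ :=
  Submodule.subset_span (Subsemigroup.subset_closure (Or.inl ⟨u, rfl⟩))

lemma mem_TL_ge (ρ : LPARep K G L) (e : G.E) : ρ.ge e ∈ TL ρ :=
  Submodule.subset_span (Subsemigroup.subset_closure (Or.inr (Or.inl ⟨e, rfl⟩)))

/-- The restriction of the representation `ρ` to the subalgebra it generates. -/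
def ρT (ρ : LPARep K G L) : LPARep K G (TL ρ) where
  pv u := ⟨ρ.pv u, mem_TL_pv ρ u⟩
  ge e := ⟨ρ.ge e, mem_TL_ge ρ e⟩
  pv_star u := Subtype.ext (ρ.pv_star u)
  pv_idem u := Subtype.ext (ρ.pv_idem u)
  pv_orth u u' h := Subtype.ext (ρ.pv_orth u u' h)
  src_mul e := Subtype.ext (ρ.src_mul e)
  mul_rng e := Subtype.ext (ρ.mul_rng e)
  sck1 e f h := Subtype.ext (by
    push_cast [apply_ite (Subtype.val : (TL ρ) → L)]
    exact ρ.sck1 e f h)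
  sck2 e := Subtype.ext (by
    push_cast
    exact ρ.sck2 e)

lemma genL (ρ : LPARep K G L) (hL : IsLPA K G L ρ) (x : L) :
    x ∈ Submodule.span K (↑(Subsemigroup.closure (sL ρ)) : Set L) := by
  obtain ⟨θ, ⟨hθ1, hθ2⟩, huniq⟩ := hL L ρ
  obtain ⟨ψ, ⟨hψ1, hψ2⟩, -⟩ := hL (TL ρ) (ρT ρ)
  have h1 : (NonUnitalStarSubalgebraClass.subtype (TL ρ)).comp ψ = θ := by
    refine huniq _ ⟨fun u => ?_, fun e => ?_⟩
    · show ((ψ (ρ.pv u) : TL ρ) : L) = ρ.pv u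
      rw [hψ1]; rfl
    · show ((ψ (ρ.ge e) : TL ρ) : L) = ρ.ge e
      rw [hψ2]; rfl
  have h2 : NonUnitalStarAlgHom.id K L = θ :=
    huniq _ ⟨fun u => rfl, fun e => rfl⟩
  have : ((ψ x : TL ρ) : L) = x := by
    calc ((ψ x : TL ρ) : L) = ((NonUnitalStarSubalgebraClass.subtype (TL ρ)).comp ψ) x := rfl
    _ = θ x := by rw [h1]
    _ = x := by rw [← h2]; rfl
  rw [← this]
  exact (ψ x).2

variable {LV : Type} [NonUnitalRing LV] [Module K LV] [SMulCommClass K LV LV]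
  [IsScalarTower K LV LV] [StarRing LV] [StarModule K LV]

/-- Generators of `LV(E,C)`. -/
def sV (σ : LVRep K G LV) : Set LV :=
  {x | (∃ v, x = σ.pv v) ∨ (∃ e f, G.r e = G.r f ∧ x = σ.tau e f)}

lemma sV_star_closure (σ : LVRep K G LV) :
    ∀ x ∈ Subsemigroup.closure (sV σ), star x ∈ Subsemigroup.closure (sV σ) := by
  intro x hx
  induction hx using Subsemigroup.closure_induction with
  | mem a ha =>
    apply Subsemigroup.subset_closure
    rcases ha with ⟨v, rfl⟩ | ⟨e, f, hef, rfl⟩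
    · rw [σ.pv_star]; exact Or.inl ⟨v, rfl⟩
    · rw [σ.tau_star e f hef]; exact Or.inr ⟨f, e, hef.symm, rfl⟩
  | mul a b _ _ ha hb => rw [star_mul]; exact mul_mem hb ha

/-- The star subalgebra generated by the generators of `LV(E,C)`. -/
def TV (σ : LVRep K G LV) : NonUnitalStarSubalgebra K LV :=
  mkSub (↑(Subsemigroup.closure (sV σ)))
    (fun _ hx _ hy => Submodule.subset_span (mul_mem hx hy))
    (fun x hx => Submodule.subset_span (sV_star_closure σ x hx))

lemma mem_TV_pv (σ : LVRep K G LV) (v : G.V0) : σ.pv v ∈ TV σ :=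
  Submodule.subset_span (Subsemigroup.subset_closure (Or.inl ⟨v, rfl⟩))

lemma mem_TV_tau (σ : LVRep K G LV) {e f : G.E} (h : G.r e = G.r f) : σ.tau e f ∈ TV σ :=
  Submodule.subset_span (Subsemigroup.subset_closure (Or.inr ⟨e, f, h, rfl⟩))

/-- The restriction of `σ` to the subalgebra it generates. -/
def σT (σ : LVRep K G LV) : LVRep K G (TV σ) where
  pv v := ⟨σ.pv v, mem_TV_pv σ v⟩
  tau e f := if h : G.r e = G.r f then ⟨σ.tau e f, mem_TV_tau σ h⟩ else 0
  pv_star v := Subtype.ext (σ.pv_star v)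
  pv_idem v := Subtype.ext (σ.pv_idem v)
  pv_orth v v' h := Subtype.ext (σ.pv_orth v v' h)
  tau_star e f h := by
    simp only [dif_pos h, dif_pos h.symm]
    exact Subtype.ext (σ.tau_star e f h)
  tau_right e f h := by
    simp only [dif_pos h]
    exact Subtype.ext (σ.tau_right e f h)
  tau_left e f h := by
    simp only [dif_pos h]
    exact Subtype.ext (σ.tau_left e f h)
  sck1 e f g h hef hgh hc := by
    simp only [dif_pos hef, dif_pos hgh]
    by_cases hfg : f = g
    · subst hfg
      have hef2 : G.r e = G.r h := hef.trans hgh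
      simp only [if_pos rfl, dif_pos hef2]
      exact Subtype.ext (by simpa [if_pos rfl] using σ.sck1 e f f h hef hgh hc)
    · simp only [if_neg hfg]
      exact Subtype.ext (by simpa [if_neg hfg] using σ.sck1 e f g h hef hgh hc)
  sck2 g := by
    have : ∀ e ∈ G.classFinset g,
        (if h : G.r e = G.r e then (⟨σ.tau e e, mem_TV_tau σ h⟩ : TV σ) else 0)
          = ⟨σ.tau e e, mem_TV_tau σ rfl⟩ := by
      intro e _; simp
    simp only [Finset.sum_congr rfl this]
    exact Subtype.ext (by push_cast; exact σ.sck2 g)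

lemma genV (σ : LVRep K G LV) (hLV : IsLV K G LV σ) (x : LV) :
    x ∈ Submodule.span K (↑(Subsemigroup.closure (sV σ)) : Set LV) := by
  obtain ⟨θ, ⟨hθ1, hθ2⟩, huniq⟩ := hLV LV σ
  obtain ⟨ψ, ⟨hψ1, hψ2⟩, -⟩ := hLV (TV σ) (σT σ)
  have h1 : (NonUnitalStarSubalgebraClass.subtype (TV σ)).comp ψ = θ := by
    refine huniq _ ⟨fun v => ?_, fun e f h => ?_⟩
    · show ((ψ (σ.pv v) : TV σ) : LV) = σ.pv v
      rw [hψ1]; rfl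
    · show ((ψ (σ.tau e f) : TV σ) : LV) = σ.tau e f
      rw [hψ2 e f h]
      simp [σT, dif_pos h]
  have h2 : NonUnitalStarAlgHom.id K LV = θ :=
    huniq _ ⟨fun v => rfl, fun e f _ => rfl⟩
  have : ((ψ x : TV σ) : LV) = x := by
    calc ((ψ x : TV σ) : LV) = ((NonUnitalStarSubalgebraClass.subtype (TV σ)).comp ψ) x := rfl
    _ = θ x := by rw [h1]
    _ = x := by rw [← h2]; rfl
  rw [← this]
  exact (ψ x).2

end Graph
section Corner
set_option linter.unusedSectionVars false
set_option maxHeartbeats 1000000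

variable {K : Type} [Field K] [StarRing K] {G : BipSepGraph}
variable {L : Type} [NonUnitalRing L] [Module K L] [SMulCommClass K L L] [IsScalarTower K L L]
  [StarRing L] [StarModule K L]

/-- The corner set `V L(E,C) V`. -/
def cornerSet (ρ : LPARep K G L) : Set L :=
  {x | ∃ (u w : G.V0) (a : L), x = ρ.pv (inl u) * a * ρ.pv (inl w)}

lemma star_ge_pv (ρ : LPARep K G L) (f : G.E) :
    star (ρ.ge f) * ρ.pv (inl (G.s f)) = star (ρ.ge f) := by
  rw [← ρ.pv_star, ← star_mul, ρ.src_mul]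

lemma pv_star_ge (ρ : LPARep K G L) (f : G.E) :
    ρ.pv (inr (G.r f)) * star (ρ.ge f) = star (ρ.ge f) := by
  rw [← ρ.pv_star, ← star_mul, ρ.mul_rng]

lemma ge_mul_star_ne (ρ : LPARep K G L) {e f : G.E} (h : G.r e ≠ G.r f) :
    ρ.ge e * star (ρ.ge f) = 0 := by
  have h2 := pv_star_ge ρ f
  rw [← ρ.mul_rng e, ← h2, ← mul_assoc, mul_assoc (ρ.ge e),
    ρ.pv_orth _ _ (fun hh => h (by injection hh)), mul_zero, zero_mul]

/-- The corner `V L(E,C) V` as a star subalgebra. -/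
def SC (ρ : LPARep K G L) : NonUnitalStarSubalgebra K L :=
  mkSub (cornerSet ρ)
    (by
      rintro x ⟨u, w, a, rfl⟩ y ⟨u', w', b, rfl⟩
      refine Submodule.subset_span
        ⟨u, w', a * ρ.pv (inl w) * (ρ.pv (inl u') * b), by simp only [mul_assoc]⟩)
    (by
      rintro x ⟨u, w, a, rfl⟩
      refine Submodule.subset_span ⟨w, u, star a, ?_⟩
      simp only [star_mul, ρ.pv_star, mul_assoc])

lemma pv_mem_SC (ρ : LPARep K G L) (v : G.V0) : ρ.pv (inl v) ∈ SC ρ :=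
  Submodule.subset_span ⟨v, v, ρ.pv (inl v), by rw [ρ.pv_idem, ρ.pv_idem]⟩

lemma sandwich (ρ : LPARep K G L) (e f : G.E) :
    ρ.pv (inl (G.s e)) * (ρ.ge e * star (ρ.ge f)) * ρ.pv (inl (G.s f))
      = ρ.ge e * star (ρ.ge f) := by
  rw [← mul_assoc, ρ.src_mul, mul_assoc, star_ge_pv]

lemma tau_mem_SC (ρ : LPARep K G L) (e f : G.E) : ρ.ge e * star (ρ.ge f) ∈ SC ρ :=
  Submodule.subset_span ⟨G.s e, G.s f, ρ.ge e * star (ρ.ge f), (sandwich ρ e f).symm⟩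

/-- The representation of the `LV(E,C)` relations inside the corner. -/
def σS (ρ : LPARep K G L) : LVRep K G (SC ρ) where
  pv v := ⟨ρ.pv (inl v), pv_mem_SC ρ v⟩
  tau e f := ⟨ρ.ge e * star (ρ.ge f), tau_mem_SC ρ e f⟩
  pv_star v := Subtype.ext (ρ.pv_star (inl v))
  pv_idem v := Subtype.ext (ρ.pv_idem (inl v))
  pv_orth v v' h := Subtype.ext (ρ.pv_orth _ _ (by simp [h]))
  tau_star e f _ := Subtype.ext (by simp [star_mul, star_star])
  tau_right e f h := Subtype.ext (by
    show ρ.ge e * star (ρ.ge f) * ρ.pv (inl (G.s f)) = ρ.ge e * star (ρ.ge f)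
    rw [mul_assoc, star_ge_pv])
  tau_left e f h := Subtype.ext (by
    show ρ.pv (inl (G.s e)) * (ρ.ge e * star (ρ.ge f)) = ρ.ge e * star (ρ.ge f)
    rw [← mul_assoc, ρ.src_mul])
  sck1 e f g h hef hgh hc := by
    apply Subtype.ext
    push_cast [apply_ite (Subtype.val : (SC ρ) → L)]
    show ρ.ge e * star (ρ.ge f) * (ρ.ge g * star (ρ.ge h)) =
      if f = g then ρ.ge e * star (ρ.ge h) else 0
    have : ρ.ge e * star (ρ.ge f) * (ρ.ge g * star (ρ.ge h))
        = ρ.ge e * (star (ρ.ge f) * ρ.ge g) * star (ρ.ge h) := by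
      simp only [mul_assoc]
    rw [this, ρ.sck1 f g hc]
    by_cases hfg : f = g
    · subst hfg
      rw [if_pos rfl, if_pos rfl, ← hef, ρ.mul_rng]
    · rw [if_neg hfg, if_neg hfg, mul_zero, zero_mul]
  sck2 g := Subtype.ext (by push_cast; exact ρ.sck2 g)

end Corner
section PiHat
set_option linter.unusedSectionVars false
set_option maxHeartbeats 1000000

variable {K : Type} [Field K] [StarRing K] {G : BipSepGraph}
variable {LV : Type} [NonUnitalRing LV] [Module K LV] [SMulCommClass K LV LV]
  [IsScalarTower K LV LV] [StarRing LV] [StarModule K LV]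

/-- The representation of the `L(E,C)` relations in the linking algebra built from `LV`. -/
def πhat (σ : LVRep K G LV) (c : G.V1 → G.E) (hc : ∀ w, G.r (c w) = w) :
    LPARep K G (LinkA K (G.V0 ⊕ G.V1) LV) where
  pv u := gel u u (Sum.elim (fun v => σ.pv v) (fun w => σ.tau (c w) (c w)) u)
  ge e := gel (inl (G.s e)) (inr (G.r e)) (σ.tau e (c (G.r e)))
  pv_star u := by
    rw [gel_star]
    cases u with
    | inl v => simp only [Sum.elim_inl, σ.pv_star]
    | inr w => simp only [Sum.elim_inr, σ.tau_star _ _ rfl]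
  pv_idem u := by
    rw [gel_mul, if_pos rfl]
    cases u with
    | inl v => simp only [Sum.elim_inl, σ.pv_idem]
    | inr w =>
      simp only [Sum.elim_inr]
      have := σ.sck1 (c w) (c w) (c w) (c w) rfl rfl (G.c_equiv.refl _)
      rw [if_pos rfl] at this
      rw [this]
  pv_orth u u' h := by rw [gel_mul, if_neg h]
  src_mul e := by
    show gel (inl (G.s e)) (inl (G.s e)) (σ.pv (G.s e)) * _ = _
    rw [gel_mul, if_pos rfl, σ.tau_left e _ (hc (G.r e)).symm]
  mul_rng e := by
    show _ * gel (inr (G.r e)) (inr (G.r e)) (σ.tau (c (G.r e)) (c (G.r e))) = _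
    rw [gel_mul, if_pos rfl]
    have := σ.sck1 e (c (G.r e)) (c (G.r e)) (c (G.r e)) (hc (G.r e)).symm rfl
      (G.c_equiv.refl _)
    rw [if_pos rfl] at this
    rw [this]
  sck1 e f hcef := by
    have hse : G.s e = G.s f := G.c_src hcef
    rw [gel_star, σ.tau_star e _ (hc (G.r e)).symm, hse, gel_mul, if_pos rfl]
    have := σ.sck1 (c (G.r e)) e f (c (G.r f)) (hc (G.r e)) (hc (G.r f)).symm hcef
    rw [this]
    by_cases hef : e = f
    · subst hef
      rw [if_pos rfl, if_pos rfl]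
      rfl
    · rw [if_neg hef, if_neg hef, gel_zero]
  sck2 e := by
    have key : ∀ f ∈ G.classFinset e,
        gel (K := K) (inl (G.s f)) (inr (G.r f)) (σ.tau f (c (G.r f)))
          * star (gel (inl (G.s f)) (inr (G.r f)) (σ.tau f (c (G.r f))))
          = gel (inl (G.s e)) (inl (G.s e)) (σ.tau f f) := by
      intro f hf
      have hsf : G.s f = G.s e := (G.c_src (mem_classFinset.mp hf)).symm
      rw [gel_star, σ.tau_star f _ (hc (G.r f)).symm, gel_mul, if_pos rfl]
      have := σ.sck1 f (c (G.r f)) (c (G.r f)) f (hc (G.r f)).symm (hc (G.r f))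
        (G.c_equiv.refl _)
      rw [if_pos rfl] at this
      rw [this, hsf]
    show (∑ f ∈ G.classFinset e, _) = gel (inl (G.s e)) (inl (G.s e)) (σ.pv (G.s e))
    rw [Finset.sum_congr rfl key, ← gel_sum, σ.sck2 e]

end PiHat
section Range
set_option linter.unusedSectionVars false
set_option maxHeartbeats 1000000

variable {K : Type} [Field K] [StarRing K] {G : BipSepGraph}
variable {L : Type} [NonUnitalRing L] [Module K L] [SMulCommClass K L L] [IsScalarTower K L L]
  [StarRing L] [StarModule K L]
variable {LV : Type} [NonUnitalRing LV] [Module K LV] [SMulCommClass K LV LV]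
  [IsScalarTower K LV LV] [StarRing LV] [StarModule K LV]

lemma span_range_mem (φ : LV →⋆ₙₐ[K] L) :
    ∀ x ∈ Submodule.span K (Set.range ⇑φ), x ∈ Set.range ⇑φ := by
  intro x hx
  induction hx using Submodule.span_induction with
  | mem a ha => exact ha
  | zero => exact ⟨0, map_zero φ⟩
  | add a b _ _ ha hb =>
    obtain ⟨z, rfl⟩ := ha; obtain ⟨z', rfl⟩ := hb
    exact ⟨z + z', map_add φ z z'⟩
  | smul k a _ ha =>
    obtain ⟨z, rfl⟩ := ha
    exact ⟨k • z, map_smul φ k z⟩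

/-- The four Peirce corners. -/
def Corner (ρ : LPARep K G L) (φ : LV →⋆ₙₐ[K] L) :
    G.V0 ⊕ G.V1 → G.V0 ⊕ G.V1 → Submodule K L
  | inl _, inl _ => Submodule.span K (Set.range ⇑φ)
  | inl _, inr _ => Submodule.span K {x | ∃ z e, x = φ z * ρ.ge e}
  | inr _, inl _ => Submodule.span K {x | ∃ z e, x = star (ρ.ge e) * φ z}
  | inr _, inr _ => Submodule.span K {x | ∃ z e f, x = star (ρ.ge e) * φ z * ρ.ge f}

variable {ρ : LPARep K G L} {σ : LVRep K G LV} {φ : LV →⋆ₙₐ[K] L}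

lemma gg (hφ2 : ∀ e f, G.r e = G.r f → φ (σ.tau e f) = ρ.ge e * star (ρ.ge f)) (e f : G.E) :
    ∃ y, φ y = ρ.ge e * star (ρ.ge f) := by
  by_cases h : G.r e = G.r f
  · exact ⟨σ.tau e f, hφ2 e f h⟩
  · exact ⟨0, by rw [map_zero, ge_mul_star_ne ρ h]⟩

lemma cmul (hφ2 : ∀ e f, G.r e = G.r f → φ (σ.tau e f) = ρ.ge e * star (ρ.ge f))
    (i j k : G.V0 ⊕ G.V1) :
    ∀ a ∈ Corner ρ φ i j, ∀ b ∈ Corner ρ φ j k, a * b ∈ Corner ρ φ i k := by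
  rcases i with u | u <;> rcases j with v | v <;> rcases k with w | w <;>
    refine spanMulSpan ?_
  · -- (1,1,1)
    rintro x ⟨z, rfl⟩ y ⟨z', rfl⟩
    exact Submodule.subset_span ⟨z * z', map_mul φ z z'⟩
  · -- (1,1,2)
    rintro x ⟨z, rfl⟩ y ⟨z', e, rfl⟩
    refine Submodule.subset_span ⟨z * z', e, ?_⟩
    rw [map_mul, mul_assoc]
  · -- (1,2,1)
    rintro x ⟨z, e, rfl⟩ y ⟨z', f, rfl⟩
    obtain ⟨y0, hy0⟩ := gg hφ2 e f
    refine Submodule.subset_span ⟨z * (y0 * z'), ?_⟩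
    rw [map_mul, map_mul, hy0]
    simp only [mul_assoc]
  · -- (1,2,2)
    rintro x ⟨z, e, rfl⟩ y ⟨z', f, g, rfl⟩
    obtain ⟨y0, hy0⟩ := gg hφ2 e f
    refine Submodule.subset_span ⟨z * (y0 * z'), g, ?_⟩
    rw [map_mul, map_mul, hy0]
    simp only [mul_assoc]
  · -- (2,1,1)
    rintro x ⟨z, e, rfl⟩ y ⟨z', rfl⟩
    refine Submodule.subset_span ⟨z * z', e, ?_⟩
    rw [map_mul, mul_assoc]
  · -- (2,1,2)
    rintro x ⟨z, e, rfl⟩ y ⟨z', f, rfl⟩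
    refine Submodule.subset_span ⟨z * z', e, f, ?_⟩
    rw [map_mul]
    simp only [mul_assoc]
  · -- (2,2,1)
    rintro x ⟨z, e, f, rfl⟩ y ⟨z', g, rfl⟩
    obtain ⟨y0, hy0⟩ := gg hφ2 f g
    refine Submodule.subset_span ⟨z * (y0 * z'), e, ?_⟩
    rw [map_mul, map_mul, hy0]
    simp only [mul_assoc]
  · -- (2,2,2)
    rintro x ⟨z, e, f, rfl⟩ y ⟨z', g, h, rfl⟩
    obtain ⟨y0, hy0⟩ := gg hφ2 f g
    refine Submodule.subset_span ⟨z * (y0 * z'), e, h, ?_⟩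
    rw [map_mul, map_mul, hy0]
    simp only [mul_assoc]

lemma cornerMono (hr : Function.Surjective G.r)
    (hφ1 : ∀ v, φ (σ.pv v) = ρ.pv (inl v))
    (hφ2 : ∀ e f, G.r e = G.r f → φ (σ.tau e f) = ρ.ge e * star (ρ.ge f)) :
    ∀ m ∈ Subsemigroup.closure (sL ρ),
      m = 0 ∨ ∃ i j, ρ.pv i * m = m ∧ m * ρ.pv j = m ∧ m ∈ Corner ρ φ i j := by
  intro m hm
  induction hm using Subsemigroup.closure_induction with
  | mem a ha =>
    rcases ha with ⟨u, rfl⟩ | ⟨e, rfl⟩ | ⟨e, rfl⟩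
    · rcases u with v | w
      · exact Or.inr ⟨inl v, inl v, ρ.pv_idem _, ρ.pv_idem _,
          Submodule.subset_span ⟨σ.pv v, hφ1 v⟩⟩
      · obtain ⟨e, rfl⟩ := hr w
        refine Or.inr ⟨inr (G.r e), inr (G.r e), ρ.pv_idem _, ρ.pv_idem _,
          Submodule.subset_span ⟨σ.pv (G.s e), e, e, ?_⟩⟩
        rw [hφ1, star_ge_pv]
        have := ρ.sck1 e e (G.c_equiv.refl e)
        rw [if_pos rfl] at this
        rw [this]
    · exact Or.inr ⟨inl (G.s e), inr (G.r e), ρ.src_mul e, ρ.mul_rng e,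
        Submodule.subset_span ⟨σ.pv (G.s e), e, by rw [hφ1, ρ.src_mul]⟩⟩
    · refine Or.inr ⟨inr (G.r e), inl (G.s e), pv_star_ge ρ e, star_ge_pv ρ e,
        Submodule.subset_span ⟨σ.pv (G.s e), e, by rw [hφ1, star_ge_pv]⟩⟩
  | mul a b _ _ ha hb =>
    rcases ha with rfl | ⟨i1, j1, ha1, ha2, haC⟩
    · exact Or.inl (zero_mul b)
    rcases hb with rfl | ⟨i2, j2, hb1, hb2, hbC⟩
    · exact Or.inl (mul_zero a)
    by_cases hj : j1 = i2
    · subst hj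
      refine Or.inr ⟨i1, j2, ?_, ?_, cmul hφ2 i1 j1 j2 a haC b hbC⟩
      · rw [← mul_assoc, ha1]
      · rw [mul_assoc, hb2]
    · left
      rw [← ha2, ← hb1, mul_assoc a, ← mul_assoc (ρ.pv j1),
        ρ.pv_orth _ _ hj, zero_mul, mul_zero]

lemma corner_sub_range (hr : Function.Surjective G.r) (hL : IsLPA K G L ρ)
    (hφ1 : ∀ v, φ (σ.pv v) = ρ.pv (inl v))
    (hφ2 : ∀ e f, G.r e = G.r f → φ (σ.tau e f) = ρ.ge e * star (ρ.ge f)) :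
    ∀ x ∈ Submodule.span K (cornerSet ρ), x ∈ Set.range ⇑φ := by
  have closure_add : ∀ x y : L, x ∈ Set.range ⇑φ → y ∈ Set.range ⇑φ →
      x + y ∈ Set.range ⇑φ := by
    rintro _ _ ⟨z, rfl⟩ ⟨z', rfl⟩; exact ⟨z + z', map_add φ z z'⟩
  have closure_smul : ∀ (k : K) (x : L), x ∈ Set.range ⇑φ → k • x ∈ Set.range ⇑φ := by
    rintro k _ ⟨z, rfl⟩; exact ⟨k • z, map_smul φ k z⟩
  intro x hx
  induction hx using Submodule.span_induction with
  | zero => exact ⟨0, map_zero φ⟩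
  | add a b _ _ ha hb => exact closure_add a b ha hb
  | smul k a _ ha => exact closure_smul k a ha
  | mem a ha =>
    obtain ⟨u, w, b, rfl⟩ := ha
    have hb := genL ρ hL b
    induction hb using Submodule.span_induction with
    | zero =>
      exact ⟨0, by rw [map_zero, mul_zero, zero_mul]⟩
    | add a' b' _ _ ha' hb' =>
      rw [mul_add, add_mul]
      exact closure_add _ _ ha' hb'
    | smul k a' _ ha' =>
      rw [mul_smul_comm, smul_mul_assoc]
      exact closure_smul k _ ha'
    | mem m hm =>
      rcases cornerMono hr hφ1 hφ2 m hm with rfl | ⟨i, j, h1, h2, hC⟩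
      · exact ⟨0, by rw [map_zero, mul_zero, zero_mul]⟩
      by_cases hi : i = inl u
      · by_cases hj : j = inl w
        · subst hi; subst hj
          have hm1 : ρ.pv (inl u) * m = m := by
            conv_lhs => rw [← h1]
            rw [← mul_assoc, ρ.pv_idem, h1]
          have hm2 : m * ρ.pv (inl w) = m := by
            conv_lhs => rw [← h2]
            rw [mul_assoc, ρ.pv_idem, h2]
          rw [hm1, hm2]
          exact span_range_mem φ m hC
        · have hm2 : m * ρ.pv (inl w) = 0 := by
            conv_lhs => rw [← h2]
            rw [mul_assoc, ρ.pv_orth _ _ hj, mul_zero]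
          rw [mul_assoc, hm2, mul_zero]
          exact ⟨0, map_zero φ⟩
      · have hm1 : ρ.pv (inl u) * m = 0 := by
          conv_lhs => rw [← h1]
          rw [← mul_assoc, ρ.pv_orth _ _ (fun hh => hi hh.symm), zero_mul]
        rw [hm1, zero_mul]
        exact ⟨0, map_zero φ⟩

end Range
section Inj
set_option linter.unusedSectionVars false
set_option maxHeartbeats 1000000

variable {K : Type} [Field K] [StarRing K] {G : BipSepGraph}
variable {L : Type} [NonUnitalRing L] [Module K L] [SMulCommClass K L L] [IsScalarTower K L L]
  [StarRing L] [StarModule K L]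
variable {LV : Type} [NonUnitalRing LV] [Module K LV] [SMulCommClass K LV LV]
  [IsScalarTower K LV LV] [StarRing LV] [StarModule K LV]
variable {ρ : LPARep K G L} {σ : LVRep K G LV} {φ : LV →⋆ₙₐ[K] L}

/-- Monomials in `LV` are supported between two vertices, and are mapped by `π ∘ φ`
to elementary elements of the linking algebra. -/
lemma phiMono (c : G.V1 → G.E) (hc : ∀ w, G.r (c w) = w)
    (π : L →⋆ₙₐ[K] LinkA K (G.V0 ⊕ G.V1) LV)
    (hπ1 : ∀ u, π (ρ.pv u) = (πhat σ c hc).pv u)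
    (hπ2 : ∀ e, π (ρ.ge e) = (πhat σ c hc).ge e)
    (hφ1 : ∀ v, φ (σ.pv v) = ρ.pv (inl v))
    (hφ2 : ∀ e f, G.r e = G.r f → φ (σ.tau e f) = ρ.ge e * star (ρ.ge f)) :
    ∀ m ∈ Subsemigroup.closure (sV σ),
      m = 0 ∨ ∃ v v', σ.pv v * m = m ∧ m * σ.pv v' = m ∧
        π (φ m) = gel (inl v) (inl v') m := by
  intro m hm
  induction hm using Subsemigroup.closure_induction with
  | mem a ha =>
    rcases ha with ⟨v, rfl⟩ | ⟨e, f, hef, rfl⟩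
    · refine Or.inr ⟨v, v, σ.pv_idem v, σ.pv_idem v, ?_⟩
      rw [hφ1, hπ1]
      rfl
    · refine Or.inr ⟨G.s e, G.s f, σ.tau_left e f hef, σ.tau_right e f hef, ?_⟩
      rw [hφ2 e f hef, map_mul, map_star, hπ2, hπ2]
      show gel (inl (G.s e)) (inr (G.r e)) (σ.tau e (c (G.r e)))
        * star (gel (inl (G.s f)) (inr (G.r f)) (σ.tau f (c (G.r f)))) = _
      rw [gel_star, σ.tau_star f _ (hc (G.r f)).symm, hef, gel_mul, if_pos rfl]
      have := σ.sck1 e (c (G.r f)) (c (G.r f)) f (hef.trans (hc (G.r f)).symm)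
        (hc (G.r f)) (G.c_equiv.refl _)
      rw [if_pos rfl] at this
      rw [this]
  | mul a b _ _ ha hb =>
    rcases ha with rfl | ⟨v1, v1', ha1, ha2, haC⟩
    · exact Or.inl (zero_mul b)
    rcases hb with rfl | ⟨v2, v2', hb1, hb2, hbC⟩
    · exact Or.inl (mul_zero a)
    by_cases hv : v1' = v2
    · subst hv
      refine Or.inr ⟨v1, v2', ?_, ?_, ?_⟩
      · rw [← mul_assoc, ha1]
      · rw [mul_assoc, hb2]
      · rw [map_mul, map_mul, haC, hbC, gel_mul, if_pos rfl]
    · left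
      rw [← ha2, ← hb1, mul_assoc a, ← mul_assoc (σ.pv v1'),
        σ.pv_orth _ _ hv, zero_mul, mul_zero]

/-- Monomials in `LV` have left and right vertex units. -/
lemma monoSandwich :
    ∀ m ∈ Subsemigroup.closure (sV σ),
      m = 0 ∨ ∃ v v', σ.pv v * m = m ∧ m * σ.pv v' = m := by
  intro m hm
  induction hm using Subsemigroup.closure_induction with
  | mem a ha =>
    rcases ha with ⟨v, rfl⟩ | ⟨e, f, hef, rfl⟩
    · exact Or.inr ⟨v, v, σ.pv_idem v, σ.pv_idem v⟩
    · exact Or.inr ⟨G.s e, G.s f, σ.tau_left e f hef, σ.tau_right e f hef⟩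
  | mul a b _ _ ha hb =>
    rcases ha with rfl | ⟨v1, v1', ha1, ha2⟩
    · exact Or.inl (zero_mul b)
    rcases hb with rfl | ⟨v2, v2', hb1, hb2⟩
    · exact Or.inl (mul_zero a)
    by_cases hv : v1' = v2
    · subst hv
      exact Or.inr ⟨v1, v2', by rw [← mul_assoc, ha1], by rw [mul_assoc, hb2]⟩
    · left
      rw [← ha2, ← hb1, mul_assoc a, ← mul_assoc (σ.pv v1'),
        σ.pv_orth _ _ hv, zero_mul, mul_zero]

/-- Local right units. -/
lemma rightUnits (hLV : IsLV K G LV σ) (z : LV) :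
    ∃ F : Finset G.V0, ∀ F' : Finset G.V0, F ⊆ F' →
      z * (∑ v ∈ F', σ.pv v) = z := by
  classical
  have hz := genV σ hLV z
  induction hz using Submodule.span_induction with
  | zero => exact ⟨∅, fun F' _ => zero_mul _⟩
  | add a b _ _ ha hb =>
    obtain ⟨F1, h1⟩ := ha; obtain ⟨F2, h2⟩ := hb
    refine ⟨F1 ∪ F2, fun F' hF => ?_⟩
    rw [add_mul, h1 F' (Finset.union_subset_iff.mp hF).1,
      h2 F' (Finset.union_subset_iff.mp hF).2]
  | smul k a _ ha =>
    obtain ⟨F1, h1⟩ := ha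
    exact ⟨F1, fun F' hF => by rw [smul_mul_assoc, h1 F' hF]⟩
  | mem m hm =>
    rcases monoSandwich m hm with rfl | ⟨v, v', h1, h2⟩
    · exact ⟨∅, fun F' _ => zero_mul _⟩
    refine ⟨{v'}, fun F' hF => ?_⟩
    have hz : ∀ w ∈ F', w ≠ v' → m * σ.pv w = 0 := by
      intro w _ hw
      rw [← h2, mul_assoc, σ.pv_orth _ _ (fun hh => hw hh.symm), mul_zero]
    rw [Finset.mul_sum]
    exact (Finset.sum_eq_single_of_mem v' (hF (Finset.mem_singleton_self v')) hz).trans h2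

/-- Sum of coordinates. -/
def coordSum : ((G.V0 ⊕ G.V1) →₀ LV) →ₗ[K] LV :=
  Finsupp.lsum K (fun _ => (LinearMap.id : LV →ₗ[K] LV))

lemma coordSum_single (i : G.V0 ⊕ G.V1) (x : LV) :
    coordSum (K := K) (Finsupp.single i x) = x := by
  simp [coordSum]

/-- The action formula recovering `z * σ.pv v` from the linking algebra. -/
lemma actFormula (hLV : IsLV K G LV σ) (c : G.V1 → G.E) (hc : ∀ w, G.r (c w) = w)
    (π : L →⋆ₙₐ[K] LinkA K (G.V0 ⊕ G.V1) LV)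
    (hπ1 : ∀ u, π (ρ.pv u) = (πhat σ c hc).pv u)
    (hπ2 : ∀ e, π (ρ.ge e) = (πhat σ c hc).ge e)
    (hφ1 : ∀ v, φ (σ.pv v) = ρ.pv (inl v))
    (hφ2 : ∀ e f, G.r e = G.r f → φ (σ.tau e f) = ρ.ge e * star (ρ.ge f))
    (z : LV) (v : G.V0) :
    coordSum (K := K) ((π (φ z)).1 (Finsupp.single (inl v) (σ.pv v))) = z * σ.pv v := by
  have hz := genV σ hLV z
  induction hz using Submodule.span_induction with
  | zero => rw [map_zero, map_zero, zero_mul]; simp [LinkA.fst_zero]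
  | add a b _ _ ha hb =>
    rw [map_add, map_add, LinkA.fst_add, LinearMap.add_apply, map_add, ha, hb, add_mul]
  | smul k a _ ha =>
    rw [map_smul, map_smul]
    show coordSum ((k • (π (φ a))).1 _) = _
    rw [LinkA.smul_def]
    show coordSum ((k • (π (φ a)).1) _) = _
    rw [LinearMap.smul_apply, map_smul, ha, smul_mul_assoc]
  | mem m hm =>
    rcases phiMono c hc π hπ1 hπ2 hφ1 hφ2 m hm with rfl | ⟨v1, v1', h1, h2, hΦ⟩
    · rw [map_zero, map_zero, zero_mul]; simp [LinkA.fst_zero]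
    rw [hΦ]
    show coordSum ((Eop (inl v1) (inl v1') m) (Finsupp.single (inl v) (σ.pv v))) = _
    rw [Eop_apply, coordSum_single, Finsupp.single_apply]
    by_cases hv : v1' = v
    · subst hv
      rw [if_pos rfl]
    · rw [if_neg (show ¬(inl v : G.V0 ⊕ G.V1) = inl v1' from fun hh => hv (Sum.inl.inj hh).symm),
        mul_zero, ← h2, mul_assoc, σ.pv_orth _ _ hv, mul_zero]

end Inj
theorem statement0 (G : BipSepGraph) (hs : Function.Surjective G.s)
    (hr : Function.Surjective G.r)
    (L : Type) [NonUnitalRing L] [Module K L] [SMulCommClass K L L] [IsScalarTower K L L]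
    [StarRing L] [StarModule K L] (ρ : LPARep K G L) (hL : IsLPA K G L ρ)
    (LV : Type) [NonUnitalRing LV] [Module K LV] [SMulCommClass K LV LV]
    [IsScalarTower K LV LV] [StarRing LV] [StarModule K LV]
    (σ : LVRep K G LV) (hLV : IsLV K G LV σ) :
    ∃ φ : LV →⋆ₙₐ[K] L, Function.Injective φ ∧
      Set.range φ = (Submodule.span K
        {x : L | ∃ (u w : G.V0) (a : L), x = ρ.pv (inl u) * a * ρ.pv (inl w)} : Submodule K L) ∧
      (∀ v : G.V0, φ (σ.pv v) = ρ.pv (inl v)) ∧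
      (∀ e f, G.r e = G.r f → φ (σ.tau e f) = ρ.ge e * star (ρ.ge f)) := by
  classical
  obtain ⟨c, hc⟩ : ∃ c : G.V1 → G.E, ∀ w, G.r (c w) = w :=
    ⟨fun w => (hr w).choose, fun w => (hr w).choose_spec⟩
  obtain ⟨φ', ⟨hφ'1, hφ'2⟩, -⟩ := hLV (SC ρ) (σS ρ)
  set Φ0 : LV →⋆ₙₐ[K] L := (NonUnitalStarSubalgebraClass.subtype (SC ρ)).comp φ' with hΦ0def
  have hφ1 : ∀ v, Φ0 (σ.pv v) = ρ.pv (inl v) := by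
    intro v
    show ((φ' (σ.pv v) : SC ρ) : L) = ρ.pv (inl v)
    rw [hφ'1]
    rfl
  have hφ2 : ∀ e f, G.r e = G.r f → Φ0 (σ.tau e f) = ρ.ge e * star (ρ.ge f) := by
    intro e f h
    show ((φ' (σ.tau e f) : SC ρ) : L) = ρ.ge e * star (ρ.ge f)
    rw [hφ'2 e f h]
    rfl
  obtain ⟨π, ⟨hπ1, hπ2⟩, -⟩ := hL (LinkA K (G.V0 ⊕ G.V1) LV) (πhat σ c hc)
  refine ⟨Φ0, ?_, ?_, hφ1, hφ2⟩
  · -- injectivity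
    have hker : ∀ z : LV, Φ0 z = 0 → z = 0 := by
      intro z hz0
      have hv : ∀ v, z * σ.pv v = 0 := by
        intro v
        have hact := actFormula (ρ := ρ) hLV c hc π hπ1 hπ2 hφ1 hφ2 z v
        rw [hz0, map_zero] at hact
        rw [← hact]
        show coordSum (K := K) ((0 : LinkA K (G.V0 ⊕ G.V1) LV).1 _) = 0
        rw [LinkA.fst_zero, LinearMap.zero_apply, map_zero]
      obtain ⟨F, hF⟩ := rightUnits hLV z
      rw [← hF F (subset_refl F), Finset.mul_sum]
      exact Finset.sum_eq_zero (fun v _ => hv v)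
    intro a b hab
    have h0 : Φ0 (a - b) = 0 := by rw [map_sub, hab, sub_self]
    exact sub_eq_zero.mp (hker _ h0)
  · -- range
    apply Set.Subset.antisymm
    · rintro x ⟨z, rfl⟩
      exact (φ' z).2
    · intro x hx
      exact corner_sub_range hr hL hφ1 hφ2 x hx
end
end

section
/- Let (E,C) be a locally finite bipartite separated graph with s(E^1)=E^{0,0} and r(E^1)=E^{0,1}, and identify LW(E,C) with the corner W L(E,C) W of L(E,C) via p_w↦w and ρ(e,f)↦e*f. Let J be the two-sided ideal of L(E,C) generated by all commutators [ee*, ff*] with e,f∈E^1. Then J ∩ LW(E,C) equals the two-sided *-ideal I of LW(E,C) generated by the elements ρ(e,f)ρ(f,g)ρ(g,h) − ρ(e,g)ρ(g,f)ρ(f,h) over all e,f,g,h∈E^1 with s(e)=s(f)=s(g)=s(h), where one sets ρ(e,f):=δ_{e,f}r(e) whenever X_e=X_f. -/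
open Sum

noncomputable section
open scoped Classical

variable (K : Type) [Field K] [StarRing K]

/-- The extended generators `ρ(e,f)` of `LW(E,C)`, where one sets
`ρ(e,f) := δ_{e,f} r(e)` whenever `X_e = X_f`. -/
def LWRep.rhoExt {G : BipSepGraph} {A : Type} [NonUnitalRing A] [Module K A]
    [SMulCommClass K A A] [IsScalarTower K A A] [StarRing A] [StarModule K A]
    (σ : LWRep K G A) (e f : G.E) : A :=
  if G.c e f then (if e = f then σ.pw (G.r e) else 0) else σ.rho e f

/-!
Under `ρ(e,f) ↦ e*f` the relator `ρ(e,f)ρ(f,g)ρ(g,h) − ρ(e,g)ρ(g,f)ρ(f,h)` becomes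
`e*[ff*, gg*]h`, which gives `I ⊆ J`. Conversely, a commutator `t = [pp*, qq*]` vanishes
unless `s(p) = s(q) = v`, and then `t = vtv` with `v = ∑_{e ∈ X_p} ee*`. Hence for
`u, w ∈ E^{0,1}` every `u(atb)w` is a sum of products `(uae)(e*tg)(g*bw)`: the outer factors
lie in the corner `W L W = LW` and the middle one is the image of a relator. So `uJw ⊆ I`
for all `u, w`, and an element of `J ∩ W L W`, being a finite sum of its pieces `uxw`,
lies in `I`.
-/

section
variable {K} {G : BipSepGraph}
  {L : Type} [NonUnitalRing L] [Module K L] [SMulCommClass K L L] [IsScalarTower K L L]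
  [StarRing L] [StarModule K L]
  {LW : Type} [NonUnitalRing LW] [Module K LW] [SMulCommClass K LW LW]
  [IsScalarTower K LW LW] [StarRing LW] [StarModule K LW]

lemma BipSepGraph.src_eq_of_mem_classFinset {e f : G.E} (h : f ∈ G.classFinset e) :
    G.s f = G.s e :=
  (G.c_src ((G.classSet_finite e).mem_toFinset.mp h)).symm

namespace LPARep

variable (ρ : LPARep K G L)

def edgeCommutator (p q : G.E) : L :=
  (ρ.ge p * star (ρ.ge p)) * (ρ.ge q * star (ρ.ge q)) -
    (ρ.ge q * star (ρ.ge q)) * (ρ.ge p * star (ρ.ge p))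

def commutatorIdeal : TwoSidedIdeal L :=
  TwoSidedIdeal.span {z | ∃ p q : G.E, z = ρ.edgeCommutator p q}

lemma star_ge_mul_pv_inl (e : G.E) : star (ρ.ge e) * ρ.pv (inl (G.s e)) = star (ρ.ge e) := by
  simpa only [star_mul, ρ.pv_star] using congrArg star (ρ.src_mul e)

lemma pv_inr_mul_star_ge (e : G.E) : ρ.pv (inr (G.r e)) * star (ρ.ge e) = star (ρ.ge e) := by
  simpa only [star_mul, ρ.pv_star] using congrArg star (ρ.mul_rng e)

lemma star_ge_mul_ge_of_src_ne {p q : G.E} (h : G.s p ≠ G.s q) :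
    star (ρ.ge p) * ρ.ge q = 0 := by
  rw [← ρ.star_ge_mul_pv_inl, ← ρ.src_mul q, mul_assoc, ← mul_assoc (ρ.pv _),
    ρ.pv_orth _ _ (by simpa using h), zero_mul, mul_zero]

lemma edgeCommutator_of_src_ne {p q : G.E} (h : G.s p ≠ G.s q) : ρ.edgeCommutator p q = 0 := by
  simp only [edgeCommutator, mul_assoc, ← mul_assoc (star (ρ.ge _)),
    ρ.star_ge_mul_ge_of_src_ne h, ρ.star_ge_mul_ge_of_src_ne (Ne.symm h), zero_mul, mul_zero,
    sub_zero]

lemma pv_inl_mul_edgeCommutator {p q : G.E} (h : G.s p = G.s q) :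
    ρ.pv (inl (G.s p)) * ρ.edgeCommutator p q = ρ.edgeCommutator p q := by
  have hq : ρ.pv (inl (G.s p)) * ρ.ge q = ρ.ge q := h ▸ ρ.src_mul q
  simp only [edgeCommutator, mul_sub, ← mul_assoc, ρ.src_mul, hq]

lemma edgeCommutator_mul_pv_inl {p q : G.E} (h : G.s p = G.s q) :
    ρ.edgeCommutator p q * ρ.pv (inl (G.s p)) = ρ.edgeCommutator p q := by
  have hq : star (ρ.ge q) * ρ.pv (inl (G.s p)) = star (ρ.ge q) := h ▸ ρ.star_ge_mul_pv_inl q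
  simp only [edgeCommutator, sub_mul, mul_assoc, ρ.star_ge_mul_pv_inl, hq]

lemma star_edgeCommutator (p q : G.E) : star (ρ.edgeCommutator p q) = ρ.edgeCommutator q p := by
  simp only [edgeCommutator, star_sub, star_mul, star_star, mul_assoc]

lemma pv_inl_mul_eq_sum (p : G.E) (y : L) :
    ρ.pv (inl (G.s p)) * y = ∑ e ∈ G.classFinset p, ρ.ge e * (star (ρ.ge e) * y) := by
  simp only [← ρ.sck2 p, Finset.sum_mul, mul_assoc]

lemma sum_pv_inr_mul_of_mem {F : Finset G.V1} {u : G.V1} (hu : u ∈ F) :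
    (∑ z ∈ F, ρ.pv (inr z)) * ρ.pv (inr u) = ρ.pv (inr u) := by
  rw [Finset.sum_mul, Finset.sum_eq_single_of_mem u hu
    (fun z _ hz => ρ.pv_orth _ _ (by simpa using hz)), ρ.pv_idem]

lemma pv_inr_mul_sum_of_mem {F : Finset G.V1} {u : G.V1} (hu : u ∈ F) :
    ρ.pv (inr u) * (∑ z ∈ F, ρ.pv (inr z)) = ρ.pv (inr u) := by
  rw [Finset.mul_sum, Finset.sum_eq_single_of_mem u hu
    (fun z _ hz => ρ.pv_orth _ _ (by simpa using Ne.symm hz)), ρ.pv_idem]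

lemma exists_finset_sum_pv_mul_mul_pv {y : L} (hy : y ∈ Submodule.span K
      {x : L | ∃ (u w : G.V1) (a : L), x = ρ.pv (inr u) * a * ρ.pv (inr w)}) :
    ∃ F : Finset G.V1, ∑ u ∈ F, ∑ w ∈ F, ρ.pv (inr u) * y * ρ.pv (inr w) = y := by
  suffices ∃ F : Finset G.V1, ∀ F' ⊇ F,
      (∑ z ∈ F', ρ.pv (inr z)) * y * (∑ z ∈ F', ρ.pv (inr z)) = y by
    obtain ⟨F, hF⟩ := this
    refine ⟨F, ?_⟩
    conv_rhs => rw [← hF F subset_rfl]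
    simp only [Finset.sum_mul, Finset.mul_sum]
    exact Finset.sum_comm
  induction hy using Submodule.span_induction with
  | mem x hx =>
    obtain ⟨u, w, a, rfl⟩ := hx
    refine ⟨{u, w}, fun F' hF' => ?_⟩
    rw [← mul_assoc, ← mul_assoc, ρ.sum_pv_inr_mul_of_mem (hF' (by simp)), mul_assoc,
      ρ.pv_inr_mul_sum_of_mem (hF' (by simp))]
  | zero => exact ⟨∅, fun _ _ => by simp⟩
  | add y z _ _ hy hz =>
    obtain ⟨F₁, hF₁⟩ := hy
    obtain ⟨F₂, hF₂⟩ := hz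
    refine ⟨F₁ ∪ F₂, fun F' hF' => ?_⟩
    rw [mul_add, add_mul, hF₁ F' (Finset.union_subset_iff.mp hF').1,
      hF₂ F' (Finset.union_subset_iff.mp hF').2]
  | smul k y _ hy =>
    obtain ⟨F, hF⟩ := hy
    exact ⟨F, fun F' hF' => by rw [mul_smul_comm, smul_mul_assoc, hF F' hF']⟩

end LPARep

def LWRep.cubicRelators (σ : LWRep K G LW) : Set LW :=
  {z | ∃ e f g h : G.E, G.s e = G.s f ∧ G.s f = G.s g ∧ G.s g = G.s h ∧
    z = σ.rhoExt K e f * σ.rhoExt K f g * σ.rhoExt K g h -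
      σ.rhoExt K e g * σ.rhoExt K g f * σ.rhoExt K f h}

variable {ρ : LPARep K G L} {σ : LWRep K G LW} {φ : LW →⋆ₙₐ[K] L}

lemma map_rhoExt (hφw : ∀ w : G.V1, φ (σ.pw w) = ρ.pv (inr w))
    (hφρ : ∀ e f, G.s e = G.s f → ¬ G.c e f → φ (σ.rho e f) = star (ρ.ge e) * ρ.ge f)
    {e f : G.E} (h : G.s e = G.s f) : φ (σ.rhoExt K e f) = star (ρ.ge e) * ρ.ge f := by
  unfold LWRep.rhoExt
  split_ifs with hc hef
  · rw [hφw, hef, ρ.sck1 f f (G.c_equiv.refl f), if_pos rfl]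
  · rw [map_zero, ρ.sck1 e f hc, if_neg hef]
  · exact hφρ e f h hc

lemma map_cubicRelator
    (hφ : ∀ e f, G.s e = G.s f → φ (σ.rhoExt K e f) = star (ρ.ge e) * ρ.ge f)
    {e f g h : G.E} (hef : G.s e = G.s f) (hfg : G.s f = G.s g) (hgh : G.s g = G.s h) :
    φ (σ.rhoExt K e f * σ.rhoExt K f g * σ.rhoExt K g h -
      σ.rhoExt K e g * σ.rhoExt K g f * σ.rhoExt K f h) =
      star (ρ.ge e) * ρ.edgeCommutator f g * ρ.ge h := by
  simp only [map_sub, map_mul, hφ _ _ hef, hφ _ _ hfg, hφ _ _ hgh, hφ _ _ (hef.trans hfg),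
    hφ _ _ hfg.symm, hφ _ _ (hfg.trans hgh), LPARep.edgeCommutator, mul_sub, sub_mul, mul_assoc]

theorem map_mem_commutatorIdeal_of_mem_span
    (hφ : ∀ e f, G.s e = G.s f → φ (σ.rhoExt K e f) = star (ρ.ge e) * ρ.ge f) {x : LW}
    (hx : x ∈ TwoSidedIdeal.span (σ.cubicRelators ∪ star '' σ.cubicRelators)) :
    φ x ∈ ρ.commutatorIdeal := by
  have hrel : ∀ z ∈ σ.cubicRelators,
      φ z ∈ ρ.commutatorIdeal ∧ φ (star z) ∈ ρ.commutatorIdeal := by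
    rintro _ ⟨e, f, g, h, hef, hfg, hgh, rfl⟩
    rw [map_star, map_cubicRelator hφ hef hfg hgh, star_mul, star_mul, star_star,
      ρ.star_edgeCommutator, ← mul_assoc]
    exact ⟨TwoSidedIdeal.mul_mem_right _ _ _ (TwoSidedIdeal.mul_mem_left _ _ _
        (TwoSidedIdeal.subset_span ⟨f, g, rfl⟩)),
      TwoSidedIdeal.mul_mem_right _ _ _ (TwoSidedIdeal.mul_mem_left _ _ _
        (TwoSidedIdeal.subset_span ⟨g, f, rfl⟩))⟩
  suffices h : TwoSidedIdeal.span (σ.cubicRelators ∪ star '' σ.cubicRelators) ≤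
      ρ.commutatorIdeal.comap φ from (TwoSidedIdeal.mem_comap φ).mp (h hx)
  refine TwoSidedIdeal.span_le.mpr ?_
  rintro _ (hz | ⟨z, hz, rfl⟩)
  exacts [(TwoSidedIdeal.mem_comap φ).mpr (hrel _ hz).1,
    (TwoSidedIdeal.mem_comap φ).mpr (hrel z hz).2]

theorem sandwich_edgeCommutator_mem_map
    (hφ : ∀ e f, G.s e = G.s f → φ (σ.rhoExt K e f) = star (ρ.ge e) * ρ.ge f)
    (hcorner : ∀ (u w : G.V1) (a : L), ρ.pv (inr u) * a * ρ.pv (inr w) ∈ Set.range φ)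
    {I : TwoSidedIdeal LW} (hI : σ.cubicRelators ⊆ I) (p q : G.E) (u w : G.V1) (a b : L) :
    ρ.pv (inr u) * (a * ρ.edgeCommutator p q * b) * ρ.pv (inr w) ∈
      (AddSubgroup.ofClass I).map (φ : LW →+ L) := by
  obtain hpq | hpq := ne_or_eq (G.s p) (G.s q)
  · simp [ρ.edgeCommutator_of_src_ne hpq, zero_mem]
  have ht : ρ.edgeCommutator p q =
      ρ.pv (inl (G.s p)) * ρ.edgeCommutator p q * ρ.pv (inl (G.s p)) := by
    rw [mul_assoc, ρ.edgeCommutator_mul_pv_inl hpq, ρ.pv_inl_mul_edgeCommutator hpq]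
  have hsplit : ρ.pv (inr u) * (a * ρ.edgeCommutator p q * b) * ρ.pv (inr w) =
      ∑ e ∈ G.classFinset p, ∑ g ∈ G.classFinset p, (ρ.pv (inr u) * a * ρ.ge e) *
        (star (ρ.ge e) * ρ.edgeCommutator p q * ρ.ge g) * (star (ρ.ge g) * b * ρ.pv (inr w)) := by
    conv_lhs => rw [ht]
    simp only [mul_assoc, ρ.pv_inl_mul_eq_sum p, Finset.mul_sum, Finset.sum_mul]
  rw [hsplit]
  refine sum_mem fun e he => sum_mem fun g hg => ?_
  have hep := BipSepGraph.src_eq_of_mem_classFinset he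
  have hgp := BipSepGraph.src_eq_of_mem_classFinset hg
  obtain ⟨x, hx⟩ := hcorner u (G.r e) (a * ρ.ge e)
  obtain ⟨y, hy⟩ := hcorner (G.r g) w (star (ρ.ge g) * b)
  simp only [mul_assoc, ρ.mul_rng] at hx
  rw [← mul_assoc, ρ.pv_inr_mul_star_ge] at hy
  refine AddSubgroup.mem_map.mpr ⟨_, I.mul_mem_right _ y (I.mul_mem_left x _
    (hI ⟨e, p, q, g, hep, hpq, hpq.symm.trans hgp.symm, rfl⟩)), ?_⟩
  rw [AddMonoidHom.coe_coe, map_mul, map_mul, hx, hy,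
    map_cubicRelator hφ hep hpq (hpq.symm.trans hgp.symm)]
  simp only [mul_assoc]

theorem sandwich_mem_map_of_mem_commutatorIdeal
    (hφ : ∀ e f, G.s e = G.s f → φ (σ.rhoExt K e f) = star (ρ.ge e) * ρ.ge f)
    (hcorner : ∀ (u w : G.V1) (a : L), ρ.pv (inr u) * a * ρ.pv (inr w) ∈ Set.range φ)
    {I : TwoSidedIdeal LW} (hI : σ.cubicRelators ⊆ I) {y : L} (hy : y ∈ ρ.commutatorIdeal)
    (u w : G.V1) (a b : L) :
    ρ.pv (inr u) * (a * y * b) * ρ.pv (inr w) ∈ (AddSubgroup.ofClass I).map (φ : LW →+ L) := by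
  induction hy using TwoSidedIdeal.span_induction generalizing a b with
  | mem y hy =>
    obtain ⟨p, q, rfl⟩ := hy
    exact sandwich_edgeCommutator_mem_map hφ hcorner hI p q u w a b
  | zero => simp [zero_mem]
  | add y z _ _ hy hz => simpa only [mul_add, add_mul] using add_mem (hy a b) (hz a b)
  | neg y _ hy => simpa only [mul_neg, neg_mul] using neg_mem (hy a b)
  | left_absorb c y _ hy => simpa only [mul_assoc] using hy (a * c) b
  | right_absorb c y _ hy => simpa only [mul_assoc] using hy a (c * b)

theorem mem_of_map_mem_commutatorIdeal (hinj : Function.Injective φ)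
    (hφ : ∀ e f, G.s e = G.s f → φ (σ.rhoExt K e f) = star (ρ.ge e) * ρ.ge f)
    (hrange : Set.range φ = (Submodule.span K
      {x : L | ∃ (u w : G.V1) (a : L), x = ρ.pv (inr u) * a * ρ.pv (inr w)} : Submodule K L))
    {I : TwoSidedIdeal LW} (hI : σ.cubicRelators ⊆ I) {x : LW}
    (hx : φ x ∈ ρ.commutatorIdeal) : x ∈ I := by
  have hcorner : ∀ (u w : G.V1) (a : L), ρ.pv (inr u) * a * ρ.pv (inr w) ∈ Set.range φ :=
    fun u w a => hrange ▸ Submodule.subset_span ⟨u, w, a, rfl⟩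
  obtain ⟨F, hF⟩ := ρ.exists_finset_sum_pv_mul_mul_pv (hrange ▸ Set.mem_range_self x)
  have hmem : φ x ∈ (AddSubgroup.ofClass I).map (φ : LW →+ L) := by
    rw [← hF]
    refine sum_mem fun u _ => sum_mem fun w _ => ?_
    have h := sandwich_mem_map_of_mem_commutatorIdeal hφ hcorner hI hx u w
      (ρ.pv (inr u)) (ρ.pv (inr w))
    simp only [← mul_assoc, ρ.pv_idem] at h
    simpa only [mul_assoc, ρ.pv_idem] using h
  obtain ⟨z, hz, hzx⟩ := AddSubgroup.mem_map.mp hmem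
  exact hinj hzx ▸ hz

end

theorem statement3 (G : BipSepGraph)
    (L : Type) [NonUnitalRing L] [Module K L] [SMulCommClass K L L] [IsScalarTower K L L]
    [StarRing L] [StarModule K L] (ρ : LPARep K G L)
    (LW : Type) [NonUnitalRing LW] [Module K LW] [SMulCommClass K LW LW]
    [IsScalarTower K LW LW] [StarRing LW] [StarModule K LW]
    (σ : LWRep K G LW)
    -- the identification of `LW(E,C)` with the corner `W L(E,C) W`:
    (φ : LW →⋆ₙₐ[K] L) (hinj : Function.Injective φ)
    (hrange : Set.range φ = (Submodule.span K
      {x : L | ∃ (u w : G.V1) (a : L), x = ρ.pv (Sum.inr u) * a * ρ.pv (Sum.inr w)} :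
        Submodule K L))
    (hφw : ∀ w : G.V1, φ (σ.pw w) = ρ.pv (Sum.inr w))
    (hφρ : ∀ e f, G.s e = G.s f → ¬ G.c e f → φ (σ.rho e f) = star (ρ.ge e) * ρ.ge f) :
    -- `J` : the ideal of `L(E,C)` generated by the commutators `[ee*, ff*]`
    letI J : TwoSidedIdeal L := TwoSidedIdeal.span
      {z : L | ∃ e f : G.E, z = (ρ.ge e * star (ρ.ge e)) * (ρ.ge f * star (ρ.ge f)) -
        (ρ.ge f * star (ρ.ge f)) * (ρ.ge e * star (ρ.ge e))}
    -- `I` : the `*`-ideal of `LW(E,C)` generated by the elements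
    -- `ρ(e,f)ρ(f,g)ρ(g,h) − ρ(e,g)ρ(g,f)ρ(f,h)`
    letI S : Set LW := {z : LW | ∃ e f g h : G.E,
      G.s e = G.s f ∧ G.s f = G.s g ∧ G.s g = G.s h ∧
      z = σ.rhoExt K e f * σ.rhoExt K f g * σ.rhoExt K g h -
        σ.rhoExt K e g * σ.rhoExt K g f * σ.rhoExt K f h}
    letI I : TwoSidedIdeal LW := TwoSidedIdeal.span (S ∪ star '' S)
    ∀ x : LW, φ x ∈ J ↔ x ∈ I := by
  intro x
  have hφ : ∀ e f, G.s e = G.s f → φ (σ.rhoExt K e f) = star (ρ.ge e) * ρ.ge f :=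
    fun e f h => map_rhoExt hφw hφρ h
  exact ⟨mem_of_map_mem_commutatorIdeal hinj hφ hrange
      (Set.subset_union_left.trans TwoSidedIdeal.subset_span),
    map_mem_commutatorIdeal_of_mem_span hφ⟩
end
end

section
/- Let 1<m≤n and let K be a field with involution. Then there is a surjective *-algebra homomorphism π : L(m,n) → L(1,n−m+1) determined by π(x_{ij}) = δ_{ij}·1 for 1≤i≤m−1 and 1≤j≤n, π(x_{mj}) = 0 for 1≤j≤m−1, and π(x_{mj}) = x_{j−m+1} for m≤j≤n, where x_1,…,x_{n−m+1} are the standard generators of L(1,n−m+1). -/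
open Sum

noncomputable section
open scoped Classical


variable (K : Type) [Field K] [StarRing K]
/-- A representation of the defining relations of the Leavitt algebra `L(m,n)`:
an `m × n` matrix `X = (x i j)` of elements of `A` with `X X* = Iₘ` and `X* X = Iₙ`. -/
structure LmnRep (K : Type) [Field K] [StarRing K] (m n : ℕ) (A : Type) [Ring A]
    [Algebra K A] [StarRing A] [StarModule K A] where
  x : Fin m → Fin n → A
  row : ∀ i j : Fin m, ∑ k, x i k * star (x j k) = if i = j then 1 else 0
  col : ∀ i j : Fin n, ∑ k, star (x k i) * x k j = if i = j then 1 else 0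

/-- `L` (with the representation `ρ`) *is* the Leavitt algebra `L(m,n)`: the universal
unital `*`-algebra over `K` on the entries of an `m × n` matrix `X` with `X X* = Iₘ`,
`X* X = Iₙ`. -/
def IsLmn (K : Type) [Field K] [StarRing K] (m n : ℕ) (L : Type) [Ring L] [Algebra K L]
    [StarRing L] [StarModule K L] (ρ : LmnRep K m n L) : Prop :=
  ∀ (A : Type) [Ring A] [Algebra K A] [StarRing A] [StarModule K A] (σ : LmnRep K m n A),
    ∃! φ : L →⋆ₐ[K] A, ∀ i j, φ (ρ.x i j) = σ.x i j

/-!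
The matrix `diag(I_{m-1}, Y)`, with `Y` the generating row of `L(1, n-m+1)`, satisfies the
Leavitt relations of `L(m,n)`, so universality of `L(m,n)` gives `π`. Its image is a
`*`-subalgebra containing every generator of `L(1, n-m+1)`; universality of `L(1, n-m+1)`
yields a map into that subalgebra which, followed by the inclusion, fixes the generators and is
therefore the identity, so the image is everything.
-/

namespace Matrix

variable {α : Type*} [Ring α] [StarRing α] {l m n : Type*} [Fintype l] [DecidableEq l]

theorem fromBlocks_one_mul_conjTranspose [Fintype n] [DecidableEq m] {X : Matrix m n α}
    (h : X * Xᴴ = 1) :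
    fromBlocks (1 : Matrix l l α) 0 0 X * (fromBlocks (1 : Matrix l l α) 0 0 X)ᴴ = 1 := by
  rw [fromBlocks_conjTranspose, fromBlocks_multiply]
  simp [h]

theorem conjTranspose_fromBlocks_one_mul [Fintype m] [DecidableEq n] {X : Matrix m n α}
    (h : Xᴴ * X = 1) :
    (fromBlocks (1 : Matrix l l α) 0 0 X)ᴴ * fromBlocks (1 : Matrix l l α) 0 0 X = 1 := by
  rw [fromBlocks_conjTranspose, fromBlocks_multiply]
  simp [h]

end Matrix

open Matrix

theorem finSumFinEquiv_trans_finCongr_symm_apply {a b N : ℕ} (h : a + b = N) (i : Fin N) :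
    (finSumFinEquiv.trans (finCongr h)).symm i =
      if hi : (i : ℕ) < a then inl ⟨i, hi⟩ else inr ⟨i - a, by omega⟩ := by
  rw [Equiv.symm_apply_eq]
  split_ifs <;> ext <;> simp; omega

namespace LmnRep

variable {K} {A B : Type} [Ring A] [Algebra K A] [StarRing A] [StarModule K A]
  [Ring B] [Algebra K B] [StarRing B] [StarModule K B] {m n : ℕ}

theorem mul_conjTranspose (σ : LmnRep K m n A) : of σ.x * (of σ.x)ᴴ = 1 := by
  ext i j
  simpa [mul_apply, one_apply] using σ.row i j

theorem conjTranspose_mul (σ : LmnRep K m n A) : (of σ.x)ᴴ * of σ.x = 1 := by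
  ext i j
  simpa [mul_apply, one_apply] using σ.col i j

def ofMatrix (X : Matrix (Fin m) (Fin n) A) (hr : X * Xᴴ = 1) (hc : Xᴴ * X = 1) :
    LmnRep K m n A where
  x := X
  row i j := by simpa [mul_apply, one_apply] using congrFun (congrFun hr i) j
  col i j := by simpa [mul_apply, one_apply] using congrFun (congrFun hc i) j

def map (φ : A →⋆ₐ[K] B) (σ : LmnRep K m n A) : LmnRep K m n B where
  x i j := φ (σ.x i j)
  row i j := by
    simp only [← map_star, ← map_mul, ← map_sum, σ.row, apply_ite φ, map_one, map_zero]
  col i j := by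
    simp only [← map_star, ← map_mul, ← map_sum, σ.col, apply_ite φ, map_one, map_zero]

def codRestrict (σ : LmnRep K m n A) (S : StarSubalgebra K A) (h : ∀ i j, σ.x i j ∈ S) :
    LmnRep K m n S where
  x i j := ⟨σ.x i j, h i j⟩
  row i j := Subtype.ext <| by simpa [apply_ite Subtype.val] using σ.row i j
  col i j := Subtype.ext <| by simpa [apply_ite Subtype.val] using σ.col i j

def blockDiagOne (k : ℕ) {p q : ℕ} (σ : LmnRep K p q A) (hm : k + p = m) (hn : k + q = n) :
    LmnRep K m n A :=
  ofMatrix ((fromBlocks (1 : Matrix (Fin k) (Fin k) A) 0 0 (of σ.x)).submatrix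
      (finSumFinEquiv.trans (finCongr hm)).symm (finSumFinEquiv.trans (finCongr hn)).symm)
    (by rw [conjTranspose_submatrix, submatrix_mul_equiv,
      fromBlocks_one_mul_conjTranspose σ.mul_conjTranspose, submatrix_one_equiv])
    (by rw [conjTranspose_submatrix, submatrix_mul_equiv,
      conjTranspose_fromBlocks_one_mul σ.conjTranspose_mul, submatrix_one_equiv])

theorem blockDiagOne_x (k : ℕ) {p q : ℕ} (σ : LmnRep K p q A) (hm : k + p = m) (hn : k + q = n)
    (i : Fin m) (j : Fin n) :
    (σ.blockDiagOne k hm hn).x i j =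
      if hi : (i : ℕ) < k then (if (i : ℕ) = (j : ℕ) then 1 else 0)
      else if hj : (j : ℕ) < k then 0
      else σ.x ⟨i - k, by omega⟩ ⟨j - k, by omega⟩ := by
  simp only [blockDiagOne, ofMatrix, submatrix_apply, finSumFinEquiv_trans_finCongr_symm_apply]
  split_ifs <;> simp_all [one_apply, Fin.ext_iff]
  omega

end LmnRep

namespace IsLmn

variable {K} {L A : Type} [Ring L] [Algebra K L] [StarRing L] [StarModule K L]
  [Ring A] [Algebra K A] [StarRing A] [StarModule K A] {m n : ℕ} {ρ : LmnRep K m n L}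

theorem hom_ext (hL : IsLmn K m n L ρ) {φ ψ : L →⋆ₐ[K] A}
    (h : ∀ i j, φ (ρ.x i j) = ψ (ρ.x i j)) : φ = ψ :=
  (hL A (ρ.map ψ)).unique h fun _ _ => rfl

theorem eq_top_of_forall_mem (hL : IsLmn K m n L ρ) (S : StarSubalgebra K L)
    (h : ∀ i j, ρ.x i j ∈ S) : S = ⊤ := by
  obtain ⟨ψ, hψ, -⟩ := hL S (ρ.codRestrict S h)
  have hsection : S.subtype.comp ψ = StarAlgHom.id K L :=
    hL.hom_ext fun i j => by simp [hψ, LmnRep.codRestrict]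
  exact StarSubalgebra.eq_top_iff.2 fun x =>
    (congrArg (· x) hsection : ((ψ x : S) : L) = x) ▸ (ψ x).2

omit [StarModule K A] in
theorem surjective_of_forall_mem_range (hL : IsLmn K m n L ρ) (π : A →⋆ₐ[K] L)
    (h : ∀ i j, ρ.x i j ∈ π.range) : Function.Surjective π := fun x =>
  (hL.eq_top_of_forall_mem π.range h ▸ StarSubalgebra.mem_top : x ∈ π.range)

end IsLmn

/-- **Statement 15.** For `1 < m ≤ n` there is a surjective `*`-algebra homomorphism
`π : L(m,n) → L(1, n−m+1)` with `π(x_{ij}) = δ_{ij}·1` for `1 ≤ i ≤ m−1`,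
`π(x_{mj}) = 0` for `1 ≤ j ≤ m−1`, and `π(x_{mj}) = x_{j−m+1}` for `m ≤ j ≤ n`
(indices `1`-based; below, `Fin`-indices are `0`-based). -/
theorem statement15 (m n : ℕ) (hm : 1 < m) (hmn : m ≤ n)
    (L : Type) [Ring L] [Algebra K L] [StarRing L] [StarModule K L]
    (ρ : LmnRep K m n L) (hL : IsLmn K m n L ρ)
    (L' : Type) [Ring L'] [Algebra K L'] [StarRing L'] [StarModule K L']
    (σ : LmnRep K 1 (n - m + 1) L') (hL' : IsLmn K 1 (n - m + 1) L' σ) :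
    ∃ π : L →⋆ₐ[K] L', Function.Surjective π ∧
      ∀ (i : Fin m) (j : Fin n),
        π (ρ.x i j) =
          if (i : ℕ) < m - 1 then (if (i : ℕ) = (j : ℕ) then 1 else 0)
          else if (j : ℕ) < m - 1 then 0
          else σ.x 0 ⟨(j : ℕ) - (m - 1), by have hj := j.2; omega⟩ := by
  obtain ⟨π, hπ, -⟩ := hL L' (σ.blockDiagOne (m - 1) (by omega) (by omega))
  have hπx : ∀ i j, π (ρ.x i j) =
      if (i : ℕ) < m - 1 then (if (i : ℕ) = (j : ℕ) then 1 else 0)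
      else if (j : ℕ) < m - 1 then 0
      else σ.x 0 ⟨(j : ℕ) - (m - 1), by have hj := j.2; omega⟩ := fun i j => by
    rw [hπ, LmnRep.blockDiagOne_x]
    split_ifs
    all_goals first | rfl | exact congrArg₂ σ.x (Subsingleton.elim _ _) rfl
  refine ⟨π, hL'.surjective_of_forall_mem_range π fun i k => ?_, hπx⟩
  refine ⟨ρ.x ⟨m - 1, by omega⟩ ⟨m - 1 + k, by omega⟩, (hπx _ _).trans ?_⟩
  rw [Subsingleton.elim i 0]
  simp
end
end

section
/- Let 2≤m<n be integers, and let M be the commutative monoid with generators a,x and defining relations a = x+(m−1)a and a = x+(n−1)a. Then (n−m+1)a = a in M, and the Grothendieck group of M is cyclic of order n−m, generated by the image of a. -/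
noncomputable section

/-- The two generators `a` and `x` of the monoid `M = ⟨a,x | a = x+(m−1)a, a = x+(n−1)a⟩`. -/
inductive MGen
  | a : MGen
  | x : MGen

/-- The defining relations `a = x + (m−1)a` and `a = x + (n−1)a`, as relations on the
free commutative (additive) monoid on `{a, x}` (i.e. on multisets). -/
def MRel (m n : ℕ) : Multiset MGen → Multiset MGen → Prop := fun s t =>
  (s = {MGen.a} ∧ t = {MGen.x} + (m - 1) • ({MGen.a} : Multiset MGen)) ∨
  (s = {MGen.a} ∧ t = {MGen.x} + (n - 1) • ({MGen.a} : Multiset MGen))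

/-- The commutative monoid `M = ⟨a,x | a = x+(m−1)a, a = x+(n−1)a⟩`. -/
def Mmn (m n : ℕ) : Type := (addConGen (MRel m n)).Quotient

instance (m n : ℕ) : AddCommMonoid (Mmn m n) := AddCon.addCommMonoid _

/-- The image of the generator `a` in `M`. -/
def aElt (m n : ℕ) : Mmn m n := AddCon.mk' _ ({MGen.a} : Multiset MGen)

/-!
Substituting `a = x + (m-1)a` into `a = x + (n-1)a` gives `a = a + (n-m)a`, so
`(n-m+1)a = a` and in any abelian group `(n-m)a = 0`. Conversely `a ↦ 1`, `x ↦ 2-m` respects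
both relations in `ℤ/(n-m)`, and since `x` is determined by `a` in a group, every homomorphism
from `M` to an abelian group factors uniquely through this map.
-/

theorem add_nsmul_sub_eq_self {M : Type*} [AddCommMonoid M] {a x : M} {m n : ℕ}
    (hm : 1 ≤ m) (hmn : m ≤ n) (hₘ : a = x + (m - 1) • a) (hₙ : a = x + (n - 1) • a) :
    a + (n - m) • a = a :=
  calc a + (n - m) • a = x + ((m - 1) + (n - m)) • a := by rw [hₘ, add_nsmul, add_assoc, ← hₘ]
    _ = a := by rw [show m - 1 + (n - m) = n - 1 by omega, ← hₙ]

theorem ZMod.addMonoidHom_ext {n : ℕ} {H : Type*} [AddGroup H] {f g : ZMod n →+ H}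
    (h : f 1 = g 1) : f = g := by
  ext z
  obtain ⟨k, rfl⟩ := ZMod.intCast_surjective z
  rw [← zsmul_one, map_zsmul, map_zsmul, h]

namespace Mmn

variable {m n : ℕ}

def xElt (m n : ℕ) : Mmn m n := AddCon.mk' _ ({MGen.x} : Multiset MGen)

theorem aElt_eq_xElt_add_nsmul {k : ℕ} (hk : k = m ∨ k = n) :
    aElt m n = xElt m n + (k - 1) • aElt m n := by
  have hrel : MRel m n {MGen.a} ({MGen.x} + (k - 1) • {MGen.a}) := by
    rcases hk with rfl | rfl
    exacts [Or.inl ⟨rfl, rfl⟩, Or.inr ⟨rfl, rfl⟩]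
  have : aElt m n = AddCon.mk' _ ({MGen.x} + (k - 1) • {MGen.a}) :=
    (AddCon.eq _).2 (AddConGen.Rel.of _ _ hrel)
  rwa [map_add, map_nsmul] at this

theorem hom_ext {A : Type*} [AddCommMonoid A] {f g : Mmn m n →+ A}
    (ha : f (aElt m n) = g (aElt m n)) (hx : f (xElt m n) = g (xElt m n)) : f = g :=
  AddCon.hom_ext <| Multiset.addHom_ext <| by rintro (_ | _) <;> assumption

def lift {A : Type*} [AddCommMonoid A] (a x : A)
    (h : ∀ k, k = m ∨ k = n → a = x + (k - 1) • a) : Mmn m n →+ A :=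
  (addConGen (MRel m n)).lift
    (Multiset.sumAddMonoidHom.comp (Multiset.mapAddMonoidHom fun | .a => a | .x => x)) <|
    AddCon.addConGen_le.2 <| by
      rintro s t (⟨rfl, rfl⟩ | ⟨rfl, rfl⟩)
      exacts [by simpa [Multiset.map_nsmul, Multiset.sum_nsmul] using h m (.inl rfl),
        by simpa [Multiset.map_nsmul, Multiset.sum_nsmul] using h n (.inr rfl)]

section lift

variable {A : Type*} [AddCommMonoid A] {a x : A} {h : ∀ k, k = m ∨ k = n → a = x + (k - 1) • a}

@[simp]
theorem lift_aElt : lift a x h (aElt m n) = a :=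
  (AddCon.lift_mk' _ _).trans (by simp)

@[simp]
theorem lift_xElt : lift a x h (xElt m n) = x :=
  (AddCon.lift_mk' _ _).trans (by simp)

end lift

/-- The image `1 - (m-1)` of `x` is forced by the first relation. -/
def toZMod (hm : 1 ≤ m) (hmn : m ≤ n) : Mmn m n →+ ZMod (n - m) :=
  lift 1 (1 - ((m - 1 : ℕ) : ZMod (n - m))) <| by
    rintro k (rfl | rfl)
    · simp
    · rw [nsmul_one, show k - 1 = (m - 1) + (k - m) by omega, Nat.cast_add, ZMod.natCast_self,
        add_zero, sub_add_cancel]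

@[simp]
theorem toZMod_aElt (hm : 1 ≤ m) (hmn : m ≤ n) : toZMod hm hmn (aElt m n) = 1 :=
  lift_aElt

theorem exists_unique_comp_toZMod (hm : 1 ≤ m) (hmn : m ≤ n) {H : Type*} [AddCommGroup H]
    (ψ : Mmn m n →+ H) : ∃! g : ZMod (n - m) →+ H, g.comp (toZMod hm hmn) = ψ := by
  have hrel (k : ℕ) (hk : k = m ∨ k = n) :
      ψ (aElt m n) = ψ (xElt m n) + (k - 1) • ψ (aElt m n) := by
    rw [← map_nsmul, ← map_add, ← aElt_eq_xElt_add_nsmul hk]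
  have htorsion : (n - m) • ψ (aElt m n) = 0 :=
    add_eq_left.1 (add_nsmul_sub_eq_self hm hmn (hrel m (.inl rfl)) (hrel n (.inr rfl)))
  let g := ZMod.lift (n - m) ⟨zmultiplesHom H (ψ (aElt m n)), by simpa using htorsion⟩
  have hg (k : ℕ) : g k = k • ψ (aElt m n) := by
    simpa using ZMod.lift_coe (n - m) ⟨zmultiplesHom H (ψ (aElt m n)), _⟩ k
  have hg_comp : g.comp (toZMod hm hmn) = ψ := by
    refine hom_ext ?_ ?_
    · simpa [toZMod] using hg 1
    · simp only [AddMonoidHom.comp_apply, toZMod, lift_xElt, map_sub]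
      rw [← Nat.cast_one, hg, hg, one_nsmul, sub_eq_iff_eq_add, ← hrel m (.inl rfl)]
  refine ⟨g, hg_comp, fun g' hg' => ZMod.addMonoidHom_ext ?_⟩
  simpa using DFunLike.congr_fun (hg'.trans hg_comp.symm) (aElt m n)

end Mmn

/-- **Statement 18.**  Let `2 ≤ m < n` and let `M = ⟨a,x | a = x+(m−1)a, a = x+(n−1)a⟩`.
Then `(n−m+1)a = a` in `M`, and the Grothendieck group of `M` (the universal abelian
group receiving a monoid homomorphism from `M`) is cyclic of order `n−m`, generated by
the image of `a` (i.e. isomorphic to `ZMod (n−m)` with the image of `a` corresponding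
to `1`). -/
theorem statement18 (m n : ℕ) (hm : 2 ≤ m) (hmn : m < n) :
    (n - m + 1) • aElt m n = aElt m n ∧
    ∃ (Γ : Type) (_ : AddCommGroup Γ) (φ : Mmn m n →+ Γ),
      (∀ (H : Type) (_ : AddCommGroup H) (ψ : Mmn m n →+ H),
        ∃! g : Γ →+ H, g.comp φ = ψ) ∧
      ∃ iso : Γ ≃+ ZMod (n - m), iso (φ (aElt m n)) = 1 := by
  have hm' : 1 ≤ m := by omega
  have hmn' : m ≤ n := hmn.le
  refine ⟨?_, ZMod (n - m), inferInstance, Mmn.toZMod hm' hmn',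
    fun H _ ψ => Mmn.exists_unique_comp_toZMod hm' hmn' ψ,
    AddEquiv.refl _, Mmn.toZMod_aElt hm' hmn'⟩
  rw [succ_nsmul']
  exact add_nsmul_sub_eq_self hm' hmn'
    (Mmn.aElt_eq_xElt_add_nsmul (.inl rfl)) (Mmn.aElt_eq_xElt_add_nsmul (.inr rfl))
end
end
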